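/- arXiv:0906.0199 — 7 statements merged into one kernel-verified Lean document; each statement's English description precedes it below -/
import Mathlib

section
/- If X is a locally two-distance set in ℝ^d with d ≥ 2 and |X| ≥ d+2, then there exist two distinct points x, x' in X such that A(x) = A(x') = {α, α'} for some distinct positive reals α, α'. -/
open scoped Classical
open scoped RealInnerProductSpace

/-- `distancesFrom X x` is the set `A_X(x)` of distances from `x` to the other points of `X`. -/
noncomputable def distancesFrom {d : ℕ} (X : Finset (EuclideanSpace ℝ (Fin d)))
    (x : EuclideanSpace ℝ (Fin d)) : Finset ℝ :=
  (X.erase x).image (fun y => dist x y)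

/-- An equilateral set in `ℝ^d` has at most `d+1` points. -/
lemma equilateral_card_le {d : ℕ} (Y : Finset (EuclideanSpace ℝ (Fin d))) (r : ℝ) (hr : 0 < r)
    (h : ∀ p ∈ Y, ∀ q ∈ Y, p ≠ q → dist p q = r) : Y.card ≤ d + 1 := by
  rcases Y.eq_empty_or_nonempty with rfl | ⟨p0, hp0⟩
  · simp
  have hvnorm : ∀ q ∈ Y.erase p0, ‖q - p0‖ = r := by
    intro q hq
    rw [← dist_eq_norm]
    exact h q (Finset.mem_of_mem_erase hq) p0 hp0 (Finset.ne_of_mem_erase hq)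
  have hinner : ∀ q ∈ Y.erase p0, ∀ q' ∈ Y.erase p0, q ≠ q' → ⟪q - p0, q' - p0⟫ = r ^ 2 / 2 := by
    intro q hq q' hq' hne
    have h1 : ‖q - p0‖ = r := hvnorm q hq
    have h2 : ‖q' - p0‖ = r := hvnorm q' hq'
    have h3 : ‖(q - p0) - (q' - p0)‖ = r := by
      have hqq : (q - p0) - (q' - p0) = q - q' := by abel
      rw [hqq, ← dist_eq_norm]
      exact h q (Finset.mem_of_mem_erase hq) q' (Finset.mem_of_mem_erase hq') hne
    have h4 := norm_sub_sq_real (q - p0) (q' - p0)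
    rw [h1, h2, h3] at h4
    linarith
  have hind : LinearIndependent ℝ (fun q : {z // z ∈ Y.erase p0} => q - p0) := by
    rw [Fintype.linearIndependent_iff]
    intro g hg
    set s := ∑ i : {z // z ∈ Y.erase p0}, g i with hs
    have hgj : ∀ j : {z // z ∈ Y.erase p0}, g j = -s := by
      intro j
      have h0 : ⟪(j : EuclideanSpace ℝ (Fin d)) - p0, ∑ i : {z // z ∈ Y.erase p0}, g i • ((i : EuclideanSpace ℝ (Fin d)) - p0)⟫ = 0 := by
        rw [hg]; exact inner_zero_right _
      rw [inner_sum] at h0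
      simp_rw [real_inner_smul_right] at h0
      have hterm : ∀ i : {z // z ∈ Y.erase p0}, g i * ⟪(j : EuclideanSpace ℝ (Fin d)) - p0, (i : EuclideanSpace ℝ (Fin d)) - p0⟫ =
          g i * (r ^ 2 / 2) + (if i = j then g i * (r ^ 2 / 2) else 0) := by
        intro i
        by_cases hij : i = j
        · subst hij
          rw [real_inner_self_eq_norm_sq, hvnorm i i.2]
          simp; ring
        · have hne : (j : EuclideanSpace ℝ (Fin d)) ≠ (i : EuclideanSpace ℝ (Fin d)) := fun hc => hij (Subtype.ext hc.symm)
          rw [hinner j j.2 i i.2 hne]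
          simp [hij]
      rw [Finset.sum_congr rfl (fun i _ => hterm i)] at h0
      rw [Finset.sum_add_distrib, Finset.sum_ite_eq' Finset.univ j
        (fun i => g i * (r ^ 2 / 2))] at h0
      simp only [Finset.mem_univ, if_true, ← Finset.sum_mul, ← hs] at h0
      have hr2 : 0 < r ^ 2 / 2 := by positivity
      have : (s + g j) * (r ^ 2 / 2) = 0 := by linarith
      rcases mul_eq_zero.mp this with h' | h'
      · linarith
      · exact absurd h' (ne_of_gt hr2)
    have hsum : s = -((Fintype.card {z // z ∈ Y.erase p0} : ℝ) * s) := by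
      conv_lhs => rw [hs, Finset.sum_congr rfl (fun j _ => hgj j)]
      rw [Finset.sum_const, Finset.card_univ, nsmul_eq_mul, mul_neg]
    have hs0 : s = 0 := by
      have hn : (0 : ℝ) ≤ (Fintype.card {z // z ∈ Y.erase p0} : ℝ) := Nat.cast_nonneg _
      nlinarith
    intro i
    rw [hgj i, hs0, neg_zero]
  have hcard := hind.fintype_card_le_finrank
  rw [finrank_euclideanSpace_fin] at hcard
  rw [Fintype.card_coe] at hcard
  have := Finset.card_erase_add_one hp0
  omega

/-- If `X` is a locally two-distance set in `ℝ^d` with `d ≥ 2` and `|X| ≥ d + 2`, then there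
exist two distinct points `x, x' ∈ X` with `A(x) = A(x') = {α, α'}` for distinct positive
reals `α, α'`. -/
theorem stmt0 (d : ℕ) (hd : 2 ≤ d) (X : Finset (EuclideanSpace ℝ (Fin d)))
    (hloc : ∀ x ∈ X, (distancesFrom X x).card ≤ 2) (hcard : d + 2 ≤ X.card) :
    ∃ x ∈ X, ∃ x' ∈ X, x ≠ x' ∧ ∃ α α' : ℝ, 0 < α ∧ 0 < α' ∧ α ≠ α' ∧
      distancesFrom X x = {α, α'} ∧ distancesFrom X x' = {α, α'} := by
  by_contra hcon
  -- basic facts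
  have hpos : ∀ y : EuclideanSpace ℝ (Fin d), ∀ t ∈ distancesFrom X y, 0 < t := by
    intro y t ht
    obtain ⟨z, hz, rfl⟩ := Finset.mem_image.mp ht
    exact dist_pos.mpr (Finset.ne_of_mem_erase hz).symm
  have hmem : ∀ y z : EuclideanSpace ℝ (Fin d), z ∈ X → z ≠ y → dist y z ∈ distancesFrom X y := by
    intro y z hz hzy
    exact Finset.mem_image_of_mem _ (Finset.mem_erase.mpr ⟨hzy, hz⟩)
  have key : ∀ y ∈ X, ∀ z ∈ X, y ≠ z → (distancesFrom X y).card = 2 →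
      distancesFrom X y = distancesFrom X z → False := by
    intro y hy z hz hyz hc heq
    obtain ⟨α, α', hne, hset⟩ := Finset.card_eq_two.mp hc
    have hα : α ∈ distancesFrom X y := by rw [hset]; exact Finset.mem_insert_self _ _
    have hα' : α' ∈ distancesFrom X y := by
      rw [hset]; exact Finset.mem_insert_of_mem (Finset.mem_singleton_self _)
    exact hcon ⟨y, hy, z, hz, hyz, α, α', hpos y α hα, hpos y α' hα', hne, hset,
      heq ▸ hset⟩
  have hc12 : ∀ y ∈ X, (distancesFrom X y).card = 1 ∨ (distancesFrom X y).card = 2 := by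
    intro y hy
    have h2 := hloc y hy
    have hX2 : 1 < X.card := by omega
    obtain ⟨z, hz, hzy⟩ := Finset.exists_mem_ne hX2 y
    have h1 : 0 < (distancesFrom X y).card :=
      Finset.card_pos.mpr ⟨dist y z, hmem y z hz hzy⟩
    omega
  -- Step 1: find a two-distance point
  by_cases hall : ∀ y ∈ X, (distancesFrom X y).card ≤ 1
  · -- all points are one-distance: X is equilateral, contradiction with |X| ≥ d+2
    have hone : ∀ y ∈ X, ∀ z ∈ X, z ≠ y → ∀ z' ∈ X, z' ≠ y → dist y z = dist y z' := by
      intro y hy z hz hzy z' hz' hz'y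
      exact Finset.card_le_one.mp (hall y hy) _ (hmem y z hz hzy) _ (hmem y z' hz' hz'y)
    obtain ⟨p0, hp0, q0, hq0, hpq⟩ := Finset.one_lt_card.mp (show 1 < X.card by omega)
    have heq : ∀ p ∈ X, ∀ q ∈ X, p ≠ q → dist p q = dist p0 q0 := by
      intro p hp q hq hpqne
      by_cases hpp0 : p = p0
      · subst hpp0
        exact hone p hp q hq (Ne.symm hpqne) q0 hq0 (Ne.symm hpq)
      · have h1 : dist p q = dist p p0 := hone p hp q hq (Ne.symm hpqne) p0 hp0
          (fun hc => hpp0 hc.symm)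
        have h2 : dist p0 p = dist p0 q0 := hone p0 hp0 p hp hpp0 q0 hq0 (Ne.symm hpq)
        rw [h1, dist_comm, h2]
    have := equilateral_card_le X (dist p0 q0) (dist_pos.mpr hpq) heq
    omega
  · push_neg at hall
    obtain ⟨x, hx, hx2⟩ := hall
    have hcx : (distancesFrom X x).card = 2 := by
      have := hloc x hx; omega
    obtain ⟨a, b, hab, hAx⟩ := Finset.card_eq_two.mp hcx
    have ha : a ∈ distancesFrom X x := by rw [hAx]; exact Finset.mem_insert_self _ _
    have hb : b ∈ distancesFrom X x := by
      rw [hAx]; exact Finset.mem_insert_of_mem (Finset.mem_singleton_self _)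
    obtain ⟨ya, hya', hdya⟩ := Finset.mem_image.mp ha
    obtain ⟨yb, hyb', hdyb⟩ := Finset.mem_image.mp hb
    have hya : ya ∈ X := Finset.mem_of_mem_erase hya'
    have hyax : ya ≠ x := Finset.ne_of_mem_erase hya'
    have hyb : yb ∈ X := Finset.mem_of_mem_erase hyb'
    have hybx : yb ≠ x := Finset.ne_of_mem_erase hyb'
    have hdya' : dist x ya = a := hdya
    have hdyb' : dist x yb = b := hdyb
    have hyayb : ya ≠ yb := by
      intro hc; rw [hc, hdyb'] at hdya'; exact hab hdya'.symm
    have hdxy : ∀ y ∈ X, y ≠ x → dist x y = a ∨ dist x y = b := by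
      intro y hy hyx
      have := hmem x y hy hyx
      rw [hAx] at this
      simpa using this
    have pair_eq : ∀ y ∈ X, ∀ p q : ℝ, p ≠ q → p ∈ distancesFrom X y →
        q ∈ distancesFrom X y → distancesFrom X y = {p, q} := by
      intro y hy p q hpq hp hq
      have hsub : ({p, q} : Finset ℝ) ⊆ distancesFrom X y := by
        intro t ht
        rcases Finset.mem_insert.mp ht with rfl | ht'
        · exact hp
        · rw [Finset.mem_singleton.mp ht']; exact hq
      exact (Finset.eq_of_subset_of_card_le hsub
        (by rw [Finset.card_pair hpq]; exact hloc y hy)).symm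
    have hfill : ∀ y ∈ X, y ≠ x → a ∈ distancesFrom X y → b ∈ distancesFrom X y → False := by
      intro y hy hyx hay hby
      have h1 : distancesFrom X y = {a, b} := pair_eq y hy a b hab hay hby
      exact key y hy x hx hyx (by rw [h1]; exact Finset.card_pair hab) (h1.trans hAx.symm)
    -- distance from point to x, as element of its own distance set
    have hmemx : ∀ y : EuclideanSpace ℝ (Fin d), y ≠ x → dist x y ∈ distancesFrom X y := by
      intro y hyx
      rw [dist_comm]
      exact hmem y x hx (Ne.symm hyx)
    rcases hc12 yb hyb with hyb1 | hyb2
    · -- yb is a one-distance point: everything is at distance b from yb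
      have hd1 : dist yb ya = dist yb x :=
        Finset.card_le_one.mp (le_of_eq hyb1) _ (hmem yb ya hya hyayb)
          _ (hmem yb x hx (Ne.symm hybx))
      have hbya : b ∈ distancesFrom X ya := by
        have : dist ya yb = b := by rw [dist_comm, hd1, dist_comm]; exact hdyb
        exact this ▸ hmem ya yb hyb (Ne.symm hyayb)
      exact absurd (hfill ya hya hyax (hdya' ▸ hmemx ya hyax) hbya) (fun h => h)
    · rcases hc12 ya hya with hya1 | hya2
      · -- ya is a one-distance point
        have hd1 : dist ya yb = dist ya x :=
          Finset.card_le_one.mp (le_of_eq hya1) _ (hmem ya yb hyb (Ne.symm hyayb))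
            _ (hmem ya x hx (Ne.symm hyax))
        have hayb : a ∈ distancesFrom X yb := by
          have : dist yb ya = a := by rw [dist_comm, hd1, dist_comm]; exact hdya
          exact this ▸ hmem yb ya hya hyayb
        exact hfill yb hyb hybx hayb (hdyb' ▸ hmemx yb hybx)
      · -- both ya and yb are two-distance points: X ⊆ {x, ya, yb}
        have hsub : X ⊆ {x, ya, yb} := by
          intro w hw
          by_cases hwx : w = x
          · simp [hwx]
        -- w ≠ x
          rcases hdxy w hw hwx with hwa | hwb
          · -- dist x w = a
            by_cases hwya : w = ya
            · simp [hwya]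
            exfalso
            have hwyb : w ≠ yb := by
              intro hc; rw [hc, hdyb'] at hwa; exact hab hwa.symm
            -- w must be a two-distance point
            have hcw : (distancesFrom X w).card = 2 := by
              rcases hc12 w hw with h1 | h2
              · exfalso
                have hd1 : dist w yb = dist w x :=
                  Finset.card_le_one.mp (le_of_eq h1) _ (hmem w yb hyb (Ne.symm hwyb))
                    _ (hmem w x hx (Ne.symm hwx))
                have hayb : a ∈ distancesFrom X yb := by
                  have : dist yb w = a := by rw [dist_comm, hd1, dist_comm]; exact hwa
                  exact this ▸ hmem yb w hw hwyb
                exact hfill yb hyb hybx hayb (hdyb' ▸ hmemx yb hybx)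
              · exact h2
            set c := dist w yb with hc
            set c' := dist ya yb with hc'
            have hcmem : c ∈ distancesFrom X w := hmem w yb hyb (Ne.symm hwyb)
            have hcmemb : c ∈ distancesFrom X yb := by
              rw [hc, dist_comm]; exact hmem yb w hw hwyb
            have hc'mema : c' ∈ distancesFrom X ya := hmem ya yb hyb (Ne.symm hyayb)
            have hc'memb : c' ∈ distancesFrom X yb := by
              rw [hc', dist_comm]; exact hmem yb ya hya hyayb
            have hca : c ≠ a := by
              intro hceq
              exact hfill yb hyb hybx (hceq ▸ hcmemb) (hdyb' ▸ hmemx yb hybx)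
            have hcb : c ≠ b := by
              intro hceq
              exact hfill w hw hwx (hwa ▸ hmemx w hwx) (hceq ▸ hcmem)
            have hc'a : c' ≠ a := by
              intro hceq
              exact hfill yb hyb hybx (hceq ▸ hc'memb) (hdyb' ▸ hmemx yb hybx)
            have hc'b : c' ≠ b := by
              intro hceq
              exact hfill ya hya hyax (hdya' ▸ hmemx ya hyax) (hceq ▸ hc'mema)
            have e1 : distancesFrom X yb = {b, c} :=
              pair_eq yb hyb b c (Ne.symm hcb) (hdyb' ▸ hmemx yb hybx) hcmemb
            have e2 : distancesFrom X yb = {b, c'} :=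
              pair_eq yb hyb b c' (Ne.symm hc'b) (hdyb' ▸ hmemx yb hybx) hc'memb
            have hcc' : c = c' := by
              have : c ∈ ({b, c'} : Finset ℝ) := by rw [← e2, e1]; simp
              rcases Finset.mem_insert.mp this with h' | h'
              · exact absurd h' hcb
              · exact Finset.mem_singleton.mp h'
            have e3 : distancesFrom X w = {a, c} :=
              pair_eq w hw a c (Ne.symm hca) (hwa ▸ hmemx w hwx) hcmem
            have e4 : distancesFrom X ya = {a, c} := by
              rw [hcc']
              exact pair_eq ya hya a c' (Ne.symm hc'a) (hdya' ▸ hmemx ya hyax) hc'mema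
            exact key w hw ya hya hwya (by rw [e3]; exact Finset.card_pair (Ne.symm hca))
              (e3.trans e4.symm)
          · -- dist x w = b : symmetric
            by_cases hwyb : w = yb
            · simp [hwyb]
            exfalso
            have hwya : w ≠ ya := by
              intro hc; rw [hc, hdya'] at hwb; exact hab hwb
            have hcw : (distancesFrom X w).card = 2 := by
              rcases hc12 w hw with h1 | h2
              · exfalso
                have hd1 : dist w ya = dist w x :=
                  Finset.card_le_one.mp (le_of_eq h1) _ (hmem w ya hya (Ne.symm hwya))
                    _ (hmem w x hx (Ne.symm hwx))
                have hbya : b ∈ distancesFrom X ya := by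
                  have : dist ya w = b := by rw [dist_comm, hd1, dist_comm]; exact hwb
                  exact this ▸ hmem ya w hw hwya
                exact hfill ya hya hyax (hdya' ▸ hmemx ya hyax) hbya
              · exact h2
            set c := dist w ya with hc
            set c' := dist yb ya with hc'
            have hcmem : c ∈ distancesFrom X w := hmem w ya hya (Ne.symm hwya)
            have hcmema : c ∈ distancesFrom X ya := by
              rw [hc, dist_comm]; exact hmem ya w hw hwya
            have hc'memb : c' ∈ distancesFrom X yb := hmem yb ya hya hyayb
            have hc'mema : c' ∈ distancesFrom X ya := by
              rw [hc', dist_comm]; exact hmem ya yb hyb (Ne.symm hyayb)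
            have hcb : c ≠ b := by
              intro hceq
              exact hfill ya hya hyax (hdya' ▸ hmemx ya hyax) (hceq ▸ hcmema)
            have hca : c ≠ a := by
              intro hceq
              exact hfill w hw hwx (hceq ▸ hcmem) (hwb ▸ hmemx w hwx)
            have hc'b : c' ≠ b := by
              intro hceq
              exact hfill ya hya hyax (hdya' ▸ hmemx ya hyax) (hceq ▸ hc'mema)
            have hc'a : c' ≠ a := by
              intro hceq
              exact hfill yb hyb hybx (hceq ▸ hc'memb) (hdyb' ▸ hmemx yb hybx)
            have e1 : distancesFrom X ya = {a, c} :=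
              pair_eq ya hya a c (Ne.symm hca) (hdya' ▸ hmemx ya hyax) hcmema
            have e2 : distancesFrom X ya = {a, c'} :=
              pair_eq ya hya a c' (Ne.symm hc'a) (hdya' ▸ hmemx ya hyax) hc'mema
            have hcc' : c = c' := by
              have : c ∈ ({a, c'} : Finset ℝ) := by rw [← e2, e1]; simp
              rcases Finset.mem_insert.mp this with h' | h'
              · exact absurd h' hca
              · exact Finset.mem_singleton.mp h'
            have e3 : distancesFrom X w = {b, c} :=
              pair_eq w hw b c (Ne.symm hcb) (hwb ▸ hmemx w hwx) hcmem
            have e4 : distancesFrom X yb = {b, c} := by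
              rw [hcc']
              exact pair_eq yb hyb b c' (Ne.symm hc'b) (hdyb' ▸ hmemx yb hybx) hc'memb
            exact key w hw yb hyb hwyb (by rw [e3]; exact Finset.card_pair (Ne.symm hcb))
              (e3.trans e4.symm)
        have h3 : X.card ≤ 3 := by
          calc X.card ≤ ({x, ya, yb} : Finset (EuclideanSpace ℝ (Fin d))).card := Finset.card_le_card hsub
          _ ≤ 3 := by
            apply le_trans (Finset.card_insert_le _ _)
            have := Finset.card_insert_le ya ({yb} : Finset (EuclideanSpace ℝ (Fin d)))
            simp at this ⊢
            omega
        omega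
end

section
/- If X is a locally two-distance set in ℝ^d with |X| = n ≥ d+2, then there exists a subset Y ⊆ X with |Y| = n - d such that |A_X(x)| = 2 for every x ∈ Y. -/
open scoped Classical

open scoped RealInnerProductSpace

/-- Vectors of equal norm `r > 0` with pairwise inner products `r^2/2` are
linearly independent. -/
lemma linIndep_equidistant {d : ℕ} {r : ℝ} (hr : 0 < r) {ι : Type*}
    (v : ι → EuclideanSpace ℝ (Fin d))
    (hnorm : ∀ i, ‖v i‖ = r) (hinner : ∀ i j, i ≠ j → ⟪v i, v j⟫ = r ^ 2 / 2) :
    LinearIndependent ℝ v := by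
  rw [linearIndependent_iff']
  intro s g hg j hj
  have hr2 : (r : ℝ) ^ 2 / 2 ≠ 0 := by positivity
  have key : ∀ k ∈ s, g k = -(∑ i ∈ s, g i) := by
    intro k hk
    have h0 : ⟪v k, ∑ i ∈ s, g i • v i⟫ = 0 := by rw [hg, inner_zero_right]
    rw [inner_sum] at h0
    simp only [real_inner_smul_right] at h0
    rw [← Finset.add_sum_erase _ _ hk] at h0
    have hsum : ∑ i ∈ s.erase k, g i * ⟪v k, v i⟫
        = ∑ i ∈ s.erase k, g i * (r ^ 2 / 2) := by
      refine Finset.sum_congr rfl fun i hi => ?_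
      rw [hinner k i (Ne.symm (Finset.ne_of_mem_erase hi))]
    rw [hsum, ← Finset.sum_mul, Finset.sum_erase_eq_sub hk,
      real_inner_self_eq_norm_sq, hnorm k] at h0
    have : (r ^ 2 / 2) * (g k + ∑ i ∈ s, g i) = 0 := by ring_nf; ring_nf at h0; linarith
    have := (mul_eq_zero.mp this).resolve_left hr2
    linarith
  have hS : (∑ i ∈ s, g i) = 0 := by
    have h1 : (∑ i ∈ s, g i) = ∑ i ∈ s, -(∑ k ∈ s, g k) :=
      Finset.sum_congr rfl key
    rw [Finset.sum_const, nsmul_eq_mul] at h1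
    rcases Nat.eq_zero_or_pos s.card with h | h
    · rw [Finset.card_eq_zero.mp h] at hj; simp at hj
    · have hc : (1:ℝ) ≤ s.card := by exact_mod_cast h
      nlinarith
  rw [key j hj, hS, neg_zero]

/-- A set of points in `ℝ^d` with all pairwise distances equal to `r` has at most
`d + 1` points. -/
lemma card_le_of_equidistant {d : ℕ} (S : Finset (EuclideanSpace ℝ (Fin d))) (r : ℝ)
    (h : ∀ x ∈ S, ∀ y ∈ S, x ≠ y → dist x y = r) : S.card ≤ d + 1 := by
  rcases le_or_gt S.card 1 with h1 | h1
  · omega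
  obtain ⟨p, hp⟩ := Finset.card_pos.mp (by omega : 0 < S.card)
  obtain ⟨q, hq, hqp⟩ := Finset.exists_mem_ne h1 p
  have hr : 0 < r := by
    rw [← h q hq p hp hqp]; exact dist_pos.mpr hqp
  set T := S.erase p with hT
  have hdist : ∀ x ∈ T, ∀ y ∈ T, x ≠ y → dist x y = r := fun x hx y hy hxy =>
    h x (Finset.mem_of_mem_erase hx) y (Finset.mem_of_mem_erase hy) hxy
  have hdp : ∀ x ∈ T, dist x p = r := fun x hx =>
    h x (Finset.mem_of_mem_erase hx) p hp (Finset.ne_of_mem_erase hx)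
  have hli : LinearIndependent ℝ (fun x : T => (x : EuclideanSpace ℝ (Fin d)) - p) := by
    apply linIndep_equidistant hr
    · intro i
      rw [← dist_eq_norm]; exact hdp i i.2
    · intro i j hij
      have hij' : (i : EuclideanSpace ℝ (Fin d)) ≠ j := fun hc => hij (Subtype.ext hc)
      have h1 : ‖(i : EuclideanSpace ℝ (Fin d)) - p‖ = r := by
        rw [← dist_eq_norm]; exact hdp i i.2
      have h2 : ‖(j : EuclideanSpace ℝ (Fin d)) - p‖ = r := by
        rw [← dist_eq_norm]; exact hdp j j.2
      have h3 : ‖((i : EuclideanSpace ℝ (Fin d)) - p) - ((j : EuclideanSpace ℝ (Fin d)) - p)‖ = r := by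
        have : ((i : EuclideanSpace ℝ (Fin d)) - p) - ((j : EuclideanSpace ℝ (Fin d)) - p)
            = (i : EuclideanSpace ℝ (Fin d)) - j := by abel
        rw [this, ← dist_eq_norm]; exact hdist i i.2 j j.2 hij'
      have hexp := norm_sub_sq_real ((i : EuclideanSpace ℝ (Fin d)) - p)
        ((j : EuclideanSpace ℝ (Fin d)) - p)
      rw [h1, h2, h3] at hexp
      nlinarith
  have hcard := hli.fintype_card_le_finrank
  rw [finrank_euclideanSpace_fin, Fintype.card_coe] at hcard
  have : T.card = S.card - 1 := Finset.card_erase_of_mem hp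
  omega

/-- If `X` is a locally two-distance set in `ℝ^d` with `|X| = n ≥ d + 2`, then there is a
subset `Y ⊆ X` with `|Y| = n - d` such that `|A_X(x)| = 2` for every `x ∈ Y`. -/
theorem stmt1 (d : ℕ) (X : Finset (EuclideanSpace ℝ (Fin d)))
    (hloc : ∀ x ∈ X, (distancesFrom X x).card ≤ 2) (hcard : d + 2 ≤ X.card) :
    ∃ Y ⊆ X, Y.card = X.card - d ∧ ∀ x ∈ Y, (distancesFrom X x).card = 2 := by
  set B := X.filter (fun x => (distancesFrom X x).card ≤ 1) with hB
  -- key fact: points of B are "one-distance" points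
  have K : ∀ x ∈ B, ∀ y ∈ X, ∀ w ∈ X, y ≠ x → w ≠ x → dist x y = dist x w := by
    intro x hx y hy w hw hyx hwx
    have hx1 : (distancesFrom X x).card ≤ 1 := (Finset.mem_filter.mp hx).2
    have hy' : dist x y ∈ distancesFrom X x :=
      Finset.mem_image_of_mem _ (Finset.mem_erase.mpr ⟨hyx, hy⟩)
    have hw' : dist x w ∈ distancesFrom X x :=
      Finset.mem_image_of_mem _ (Finset.mem_erase.mpr ⟨hwx, hw⟩)
    exact Finset.card_le_one.mp hx1 _ hy' _ hw'
  have hBX : B ⊆ X := Finset.filter_subset _ _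
  -- main claim : B.card ≤ d
  have hBd : B.card ≤ d := by
    by_contra hcon
    push_neg at hcon
    -- d + 1 ≤ B.card; first dispose of d = 0
    have hd1 : 2 ≤ B.card ∨ d = 0 := by omega
    rcases hd1 with h2 | h0
    swap
    · subst h0
      have : X.card ≤ 1 := Finset.card_le_one.mpr (fun a _ b _ => Subsingleton.elim a b)
      omega
    obtain ⟨b0, hb0, b1, hb1, hb01⟩ := Finset.one_lt_card.mp h2
    set r := dist b0 b1 with hrdef
    -- every point of B is at distance r from every other point of X
    have C : ∀ x ∈ B, ∀ y ∈ X, y ≠ x → dist x y = r := by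
      intro x hx y hy hyx
      by_cases hxb0 : x = b0
      · subst hxb0; exact K x hx y hy b1 (hBX hb1) hyx (Ne.symm hb01)
      · have h1 : dist x y = dist x b0 := K x hx y hy b0 (hBX hb0) hyx (Ne.symm hxb0)
        have h2 : dist b0 x = dist b0 b1 :=
          K b0 hb0 x (hBX hx) b1 (hBX hb1) (hxb0 : x ≠ b0) hb01.symm
        rw [h1, dist_comm, h2]
    -- build an equidistant set S of size ≥ d + 2
    have : ∃ S : Finset (EuclideanSpace ℝ (Fin d)), d + 2 ≤ S.card ∧
        ∀ x ∈ S, ∀ y ∈ S, x ≠ y → dist x y = r := by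
      by_cases hBeq : B = X
      · refine ⟨X, hcard, fun x hx y hy hxy => ?_⟩
        exact C x (hBeq ▸ hx) y hy (Ne.symm hxy)
      · obtain ⟨z, hzX, hzB⟩ := Finset.exists_of_ssubset (hBX.ssubset_of_ne hBeq)
        refine ⟨insert z B, ?_, ?_⟩
        · rw [Finset.card_insert_of_notMem hzB]; omega
        · intro x hx y hy hxy
          rcases Finset.mem_insert.mp hx with rfl | hxB
          · rcases Finset.mem_insert.mp hy with rfl | hyB
            · exact absurd rfl hxy
            · rw [dist_comm]; exact C y hyB x hzX hxy
          · have hyX : y ∈ X := by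
              rcases Finset.mem_insert.mp hy with rfl | hyB
              exacts [hzX, hBX hyB]
            exact C x hxB y hyX (Ne.symm hxy)
    obtain ⟨S, hS1, hS2⟩ := this
    have := card_le_of_equidistant S r hS2
    omega
  -- choose Y inside X \ B
  have hsd : X.card - d ≤ (X \ B).card := by
    rw [Finset.card_sdiff_of_subset hBX]; omega
  obtain ⟨Y, hYsub, hYcard⟩ := Finset.exists_subset_card_eq hsd
  refine ⟨Y, hYsub.trans (Finset.sdiff_subset), hYcard, fun x hx => ?_⟩
  have hx' := hYsub hx
  rw [Finset.mem_sdiff] at hx'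
  have h2 := hloc x hx'.1
  have h1 : ¬ (distancesFrom X x).card ≤ 1 := by
    intro hc
    exact hx'.2 (Finset.mem_filter.mpr ⟨hx'.1, hc⟩)
  omega
end

section
/- The subset of points in a locally two-distance set X ⊆ ℝ^d all of whose distances to other points of X are equal (i.e., |A_X(x)| = 1) forms a one-distance set, and hence has at most d+1 points; moreover if |X| ≥ d+2 this subset has at most d points. -/
/-!
If `x` and `z` each have a single distance to the rest of `X`, that distance is `dist x z` for
both, so all single-distance points share one distance `r` and form a regular simplex, which has
at most `d + 1` vertices. Every other point `p ∈ X` is at distance `r` from all single-distance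
points, so adjoining it still gives a regular simplex; when `|X| ≥ d + 2` such a `p` exists,
leaving room for at most `d` single-distance points.
-/

open scoped Classical

open Finset

section Equilateral

variable {V P : Type*} [NormedAddCommGroup V] [InnerProductSpace ℝ V] [MetricSpace P]
  [NormedAddTorsor V P]

/- For weights summing to zero, `‖∑ wᵢ pᵢ‖² = -½ ∑ᵢⱼ wᵢ wⱼ dᵢⱼ²`; when all `dᵢⱼ = r` for `i ≠ j`
the right-hand side is `½ r² ∑ wᵢ²`, which vanishes only for zero weights. -/
theorem affineIndependent_of_dist_eq {ι : Type*} {p : ι → P} {r : ℝ} (hr : r ≠ 0)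
    (h : ∀ i j, i ≠ j → dist (p i) (p j) = r) : AffineIndependent ℝ p := by
  intro s w hw hv
  have row : ∀ i ∈ s, ∑ j ∈ s, w i * w j * (dist (p i) (p j) * dist (p i) (p j)) =
      -(r ^ 2 * w i ^ 2) := by
    intro i hi
    rw [← add_sum_erase s _ hi, dist_self, sum_congr rfl fun j hj => by
      rw [h i j (ne_of_mem_erase hj).symm]]
    rw [← sum_mul, ← mul_sum, sum_erase_eq_sub hi, hw]
    ring
  have hsq : r ^ 2 * ∑ i ∈ s, w i ^ 2 = 0 := by
    have := EuclideanGeometry.inner_weightedVSub p hw p hw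
    rw [hv, inner_zero_left, sum_congr rfl row, sum_neg_distrib, ← mul_sum] at this
    linarith
  have hsum := (mul_eq_zero.mp hsq).resolve_left (pow_ne_zero 2 hr)
  intro i hi
  exact pow_eq_zero_iff two_ne_zero |>.mp <|
    (sum_eq_zero_iff_of_nonneg fun j _ => sq_nonneg (w j)).mp hsum i hi

theorem card_le_finrank_add_one_of_dist_eq [FiniteDimensional ℝ V] (S : Finset P)
    (h : ∀ x ∈ S, ∀ y ∈ S, ∀ z ∈ S, ∀ w ∈ S, x ≠ y → z ≠ w → dist x y = dist z w) :
    #S ≤ Module.finrank ℝ V + 1 := by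
  rcases le_or_gt #S 1 with hS | hS
  · omega
  obtain ⟨a, ha, b, hb, hab⟩ := one_lt_card.mp hS
  have hind : AffineIndependent ℝ ((↑) : S → P) :=
    affineIndependent_of_dist_eq (dist_ne_zero.mpr hab) fun x y hxy =>
      h x x.2 y y.2 a ha b hb (Subtype.coe_ne_coe.mpr hxy) hab
  calc #S = Fintype.card S := (Fintype.card_coe S).symm
    _ ≤ Module.finrank ℝ (vectorSpan ℝ (Set.range ((↑) : S → P))) + 1 :=
      hind.card_le_finrank_succ
    _ ≤ Module.finrank ℝ V + 1 := by gcongr; exact Submodule.finrank_le _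

end Equilateral

section SingleDistancePoints

variable {d : ℕ} {X : Finset (EuclideanSpace ℝ (Fin d))}

noncomputable def singleDistancePoints (X : Finset (EuclideanSpace ℝ (Fin d))) :
    Finset (EuclideanSpace ℝ (Fin d)) :=
  X.filter fun x => #(distancesFrom X x) = 1

theorem singleDistancePoints_subset : singleDistancePoints X ⊆ X := filter_subset _ _

theorem dist_eq_of_mem_singleDistancePoints {x y z : EuclideanSpace ℝ (Fin d)}
    (hx : x ∈ singleDistancePoints X) (hy : y ∈ X) (hz : z ∈ X) (hxy : x ≠ y) (hxz : x ≠ z) :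
    dist x y = dist x z :=
  card_le_one.mp (mem_filter.mp hx).2.le _ (mem_image_of_mem _ (mem_erase.mpr ⟨hxy.symm, hy⟩))
    _ (mem_image_of_mem _ (mem_erase.mpr ⟨hxz.symm, hz⟩))

theorem dist_eq_dist_of_mem_singleDistancePoints {x y z w : EuclideanSpace ℝ (Fin d)}
    (hx : x ∈ singleDistancePoints X) (hy : y ∈ X) (hz : z ∈ singleDistancePoints X)
    (hw : w ∈ X) (hxy : x ≠ y) (hzw : z ≠ w) : dist x y = dist z w := by
  rcases eq_or_ne x z with rfl | hxz
  · exact dist_eq_of_mem_singleDistancePoints hx hy hw hxy hzw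
  calc dist x y = dist x z :=
        dist_eq_of_mem_singleDistancePoints hx hy (singleDistancePoints_subset hz) hxy hxz
    _ = dist z x := dist_comm x z
    _ = dist z w :=
        dist_eq_of_mem_singleDistancePoints hz (singleDistancePoints_subset hx) hw hxz.symm hzw

theorem exists_singleDistancePoint_dist_eq {p x y : EuclideanSpace ℝ (Fin d)} (hp : p ∈ X)
    (hx : x ∈ insert p (singleDistancePoints X)) (hy : y ∈ insert p (singleDistancePoints X))
    (hxy : x ≠ y) :
    ∃ a ∈ singleDistancePoints X, ∃ b ∈ X, a ≠ b ∧ dist x y = dist a b := by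
  rcases mem_insert.mp hx with rfl | hxS
  · have hyS : y ∈ singleDistancePoints X := (mem_insert.mp hy).resolve_left hxy.symm
    exact ⟨y, hyS, x, hp, hxy.symm, dist_comm x y⟩
  · exact ⟨x, hxS, y, (insert_subset hp singleDistancePoints_subset) hy, hxy, rfl⟩

theorem dist_eq_dist_of_mem_insert_singleDistancePoints {p : EuclideanSpace ℝ (Fin d)}
    (hp : p ∈ X) :
    ∀ x ∈ insert p (singleDistancePoints X), ∀ y ∈ insert p (singleDistancePoints X),
      ∀ z ∈ insert p (singleDistancePoints X), ∀ w ∈ insert p (singleDistancePoints X),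
      x ≠ y → z ≠ w → dist x y = dist z w := by
  intro x hx y hy z hz w hw hxy hzw
  obtain ⟨a, ha, b, hb, hab, hxy'⟩ := exists_singleDistancePoint_dist_eq hp hx hy hxy
  obtain ⟨c, hc, e, he, hce, hzw'⟩ := exists_singleDistancePoint_dist_eq hp hz hw hzw
  rw [hxy', hzw']
  exact dist_eq_dist_of_mem_singleDistancePoints ha hb hc he hab hce

end SingleDistancePoints

theorem stmt2_general (d : ℕ) (X : Finset (EuclideanSpace ℝ (Fin d))) :
    (∀ x ∈ X.filter (fun x => (distancesFrom X x).card = 1),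
      ∀ y ∈ X.filter (fun x => (distancesFrom X x).card = 1),
      ∀ z ∈ X.filter (fun x => (distancesFrom X x).card = 1),
      ∀ w ∈ X.filter (fun x => (distancesFrom X x).card = 1),
        x ≠ y → z ≠ w → dist x y = dist z w) ∧
    (X.filter (fun x => (distancesFrom X x).card = 1)).card ≤ d + 1 ∧
    (d + 2 ≤ X.card → (X.filter (fun x => (distancesFrom X x).card = 1)).card ≤ d) := by
  change (∀ x ∈ singleDistancePoints X, _) ∧ #(singleDistancePoints X) ≤ d + 1 ∧
    (d + 2 ≤ #X → #(singleDistancePoints X) ≤ d)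
  have one_distance : ∀ x ∈ singleDistancePoints X, ∀ y ∈ singleDistancePoints X,
      ∀ z ∈ singleDistancePoints X, ∀ w ∈ singleDistancePoints X,
      x ≠ y → z ≠ w → dist x y = dist z w := fun x hx y hy z hz w hw =>
    dist_eq_dist_of_mem_singleDistancePoints hx (singleDistancePoints_subset hy) hz
      (singleDistancePoints_subset hw)
  have card_le := card_le_finrank_add_one_of_dist_eq _ one_distance
  rw [finrank_euclideanSpace_fin] at card_le
  refine ⟨one_distance, card_le, fun hX => ?_⟩
  obtain ⟨p, hpX, hpS⟩ := exists_mem_notMem_of_card_lt_card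
    (show #(singleDistancePoints X) < #X by omega)
  have card_insert_le :=
    card_le_finrank_add_one_of_dist_eq _ (dist_eq_dist_of_mem_insert_singleDistancePoints hpX)
  rw [card_insert_of_notMem hpS, finrank_euclideanSpace_fin] at card_insert_le
  omega

/-- In a locally two-distance set `X ⊆ ℝ^d`, the subset `S` of points `x` with `|A_X(x)| = 1`
is a one-distance set (all pairwise distances in `S` coincide), hence `|S| ≤ d + 1`;
moreover if `|X| ≥ d + 2` then `|S| ≤ d`. -/
theorem stmt2 (d : ℕ) (X : Finset (EuclideanSpace ℝ (Fin d)))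
    (hloc : ∀ x ∈ X, (distancesFrom X x).card ≤ 2) :
    (∀ x ∈ X.filter (fun x => (distancesFrom X x).card = 1),
      ∀ y ∈ X.filter (fun x => (distancesFrom X x).card = 1),
      ∀ z ∈ X.filter (fun x => (distancesFrom X x).card = 1),
      ∀ w ∈ X.filter (fun x => (distancesFrom X x).card = 1),
        x ≠ y → z ≠ w → dist x y = dist z w) ∧
    (X.filter (fun x => (distancesFrom X x).card = 1)).card ≤ d + 1 ∧
    (d + 2 ≤ X.card → (X.filter (fun x => (distancesFrom X x).card = 1)).card ≤ d) :=
  stmt2_general d X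
end

section
/- Every locally two-distance set in ℝ^d contains at most binom(d+2, 2) points; that is, LDS_d(2) ≤ (d+2)(d+1)/2. -/
open scoped Classical

/-!
Blokhuis' polynomial method. If every other point of `X` lies at distance `a` or `b` from `x`,
the quartic `F_x y = (‖y - x‖² - a²)(‖y - x‖² - b²)` vanishes on `X \ {x}` but not at `x`.
All `F_x` lie in the span of `‖y‖⁴, ‖y‖² yᵢ, yᵢ yⱼ, yᵢ, 1`, of dimension `2 + 2d + C(d+1, 2)`,
and together with the `d + 1` affine functions `1, yᵢ` they are linearly independent. Indeed, in
a relation `∑ λ_x F_x + affine = 0`, the coefficients of `s⁴` and `s³` along each line `s ↦ s u`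
give `∑ λ_x = 0` and `∑ λ_x x = 0`; evaluating at each `z ∈ X`, multiplying by `λ_z` and summing
then leaves `∑ λ_z² a_z² b_z² = 0`. Hence `|X| + d + 1 ≤ 2 + 2d + C(d+1, 2)`.
-/

open Finset Module
open scoped RealInnerProductSpace

lemma quartic_leading_coeffs_eq_zero {c₄ c₃ c₂ c₁ c₀ : ℝ}
    (h : ∀ s : ℝ, c₄ * s ^ 4 + c₃ * s ^ 3 + c₂ * s ^ 2 + c₁ * s + c₀ = 0) : c₄ = 0 ∧ c₃ = 0 := by
  have := h 0; have := h 1; have := h (-1); have := h 2; have := h (-2)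
  constructor <;> linarith

lemma Finset.exists_forall_eq_or_eq_of_card_le_two {α : Type*} {S : Finset α} (hS : #S ≤ 2)
    {p : α → Prop} (hp : ∀ r ∈ S, p r) (hne : ∃ r, p r) :
    ∃ a b, p a ∧ p b ∧ ∀ r ∈ S, r = a ∨ r = b := by
  obtain ⟨r₀, hr₀⟩ := hne
  interval_cases h : #S
  · exact ⟨r₀, r₀, hr₀, hr₀, by simp [card_eq_zero.1 h]⟩
  · obtain ⟨a, rfl⟩ := card_eq_one.1 h
    exact ⟨a, a, hp a (mem_singleton_self a), hp a (mem_singleton_self a), by simp⟩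
  · obtain ⟨a, b, -, rfl⟩ := card_eq_two.1 h
    exact ⟨a, b, hp a (by simp), hp b (by simp), by simp⟩

section SphereQuartic

variable {E : Type*} [NormedAddCommGroup E]

def sphereQuartic (x : E) (a b : ℝ) (y : E) : ℝ :=
  (‖y - x‖ ^ 2 - a ^ 2) * (‖y - x‖ ^ 2 - b ^ 2)

lemma sphereQuartic_self (x : E) (a b : ℝ) : sphereQuartic x a b x = a ^ 2 * b ^ 2 := by
  simp [sphereQuartic]

lemma sphereQuartic_eq_zero {x y : E} {a b : ℝ} (h : dist x y = a ∨ dist x y = b) :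
    sphereQuartic x a b y = 0 := by
  rw [sphereQuartic, ← dist_eq_norm, dist_comm]
  rcases h with rfl | rfl <;> ring

variable [InnerProductSpace ℝ E]

lemma sphereQuartic_eq (x : E) (a b : ℝ) (y : E) :
    sphereQuartic x a b y = (‖y‖ ^ 2) ^ 2 - 4 * (‖y‖ ^ 2 * ⟪x, y⟫)
      + (2 * ‖x‖ ^ 2 - a ^ 2 - b ^ 2) * ‖y‖ ^ 2 + 4 * (⟪x, y⟫ * ⟪x, y⟫)
      - 2 * (2 * ‖x‖ ^ 2 - a ^ 2 - b ^ 2) * ⟪x, y⟫ + (‖x‖ ^ 2 - a ^ 2) * (‖x‖ ^ 2 - b ^ 2) := by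
  rw [sphereQuartic, norm_sub_sq_real, real_inner_comm]
  ring

lemma exists_sphereQuartic_smul_eq (x : E) (a b : ℝ) (u : E) : ∃ c₂ c₁ c₀ : ℝ, ∀ s : ℝ,
    sphereQuartic x a b (s • u) = ‖u‖ ^ 4 * s ^ 4 - 4 * ‖u‖ ^ 2 * ⟪x, u⟫ * s ^ 3
      + c₂ * s ^ 2 + c₁ * s + c₀ := by
  refine ⟨(2 * ‖x‖ ^ 2 - a ^ 2 - b ^ 2) * ‖u‖ ^ 2 + 4 * ⟪x, u⟫ ^ 2,
    -2 * (2 * ‖x‖ ^ 2 - a ^ 2 - b ^ 2) * ⟪x, u⟫, (‖x‖ ^ 2 - a ^ 2) * (‖x‖ ^ 2 - b ^ 2), fun s => ?_⟩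
  rw [sphereQuartic_eq, norm_smul, real_inner_smul_right, Real.norm_eq_abs, mul_pow, sq_abs]
  ring

variable {ι : Type*} [Fintype ι] (x : ι → E) (a b : ι → ℝ)

lemma exists_sum_mul_sphereQuartic_smul_eq (l : ι → ℝ) (u : E) : ∃ c₂ c₁ c₀ : ℝ, ∀ s : ℝ,
    ∑ i, l i * sphereQuartic (x i) (a i) (b i) (s • u) = (∑ i, l i) * ‖u‖ ^ 4 * s ^ 4
      - 4 * ‖u‖ ^ 2 * ⟪∑ i, l i • x i, u⟫ * s ^ 3 + c₂ * s ^ 2 + c₁ * s + c₀ := by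
  choose c₂ c₁ c₀ hc using fun i => exists_sphereQuartic_smul_eq (x i) (a i) (b i) u
  refine ⟨∑ i, l i * c₂ i, ∑ i, l i * c₁ i, ∑ i, l i * c₀ i, fun s => ?_⟩
  simp only [hc, sum_inner, real_inner_smul_left, Finset.sum_mul, Finset.mul_sum,
    ← Finset.sum_add_distrib, ← Finset.sum_sub_distrib]
  exact sum_congr rfl fun i _ => by ring

lemma sum_eq_zero_and_sum_smul_eq_zero [Nontrivial E] {l : ι → ℝ} {c : ℝ} {w : E}
    (h : ∀ y, ∑ i, l i * sphereQuartic (x i) (a i) (b i) y + (c + ⟪w, y⟫) = 0) :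
    ∑ i, l i = 0 ∧ ∑ i, l i • x i = 0 := by
  have key (u : E) :
      (∑ i, l i) * ‖u‖ ^ 4 = 0 ∧ -4 * ‖u‖ ^ 2 * ⟪∑ i, l i • x i, u⟫ = 0 := by
    obtain ⟨c₂, c₁, c₀, hline⟩ := exists_sum_mul_sphereQuartic_smul_eq x a b l u
    refine quartic_leading_coeffs_eq_zero (c₂ := c₂) (c₁ := c₁ + ⟪w, u⟫) (c₀ := c₀ + c)
      fun s => ?_
    have hs := h (s • u)
    rw [hline, real_inner_smul_right] at hs
    linear_combination hs
  obtain ⟨u, hu⟩ := exists_ne (0 : E)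
  refine ⟨?_, ?_⟩
  · simpa [hu] using (key u).1
  · simpa using (key (∑ i, l i • x i)).2

lemma eq_zero_of_sum_mul_sphereQuartic_add_inner_eq_zero [Nontrivial E]
    (ha : ∀ i, a i ≠ 0) (hb : ∀ i, b i ≠ 0)
    (hvanish : ∀ i j, i ≠ j → sphereQuartic (x i) (a i) (b i) (x j) = 0)
    {l : ι → ℝ} {c : ℝ} {w : E}
    (h : ∀ y, ∑ i, l i * sphereQuartic (x i) (a i) (b i) y + (c + ⟪w, y⟫) = 0) :
    l = 0 ∧ c = 0 ∧ w = 0 := by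
  obtain ⟨hl, hlx⟩ := sum_eq_zero_and_sum_smul_eq_zero x a b h
  have hdiag (j : ι) : l j * (a j ^ 2 * b j ^ 2) + (c + ⟪w, x j⟫) = 0 := by
    have hj := h (x j)
    rwa [sum_eq_single j (fun i _ hij => by rw [hvanish i j hij, mul_zero]) (by simp),
      sphereQuartic_self] at hj
  have hsq : ∑ j, l j ^ 2 * (a j ^ 2 * b j ^ 2) = 0 := by
    calc ∑ j, l j ^ 2 * (a j ^ 2 * b j ^ 2) = -(c * ∑ j, l j + ⟪w, ∑ j, l j • x j⟫) := by
          simp only [Finset.mul_sum, inner_sum, real_inner_smul_right, ← Finset.sum_add_distrib,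
            ← Finset.sum_neg_distrib]
          exact sum_congr rfl fun j _ => by linear_combination l j * hdiag j
      _ = 0 := by simp [hl, hlx]
  have hl0 : l = 0 := by
    ext j
    have hpos (i : ι) : 0 < a i ^ 2 * b i ^ 2 := by have := ha i; have := hb i; positivity
    have := (sum_eq_zero_iff_of_nonneg fun i _ => (mul_nonneg (sq_nonneg (l i)) (hpos i).le)).1
      hsq j (mem_univ j)
    simpa [(hpos j).ne'] using this
  have haff (y : E) : c + ⟪w, y⟫ = 0 := by simpa [hl0] using h y
  have hc : c = 0 := by simpa using haff 0
  exact ⟨hl0, hc, by simpa [hc] using haff w⟩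

end SphereQuartic

section QuarticSpace

variable {E : Type*} [NormedAddCommGroup E] [InnerProductSpace ℝ E]
  {ι : Type*} [Fintype ι] (e : OrthonormalBasis ι ℝ E)

noncomputable def quarticGenerators : Unit ⊕ ι ⊕ Sym2 ι ⊕ ι ⊕ Unit → E → ℝ :=
  Sum.elim (fun _ y => (‖y‖ ^ 2) ^ 2) <| Sum.elim (fun i y => ‖y‖ ^ 2 * ⟪e i, y⟫) <|
    Sum.elim (Sym2.lift ⟨fun i j y => ⟪e i, y⟫ * ⟪e j, y⟫, fun i j => by ext; ring⟩) <|
      Sum.elim (fun i y => ⟪e i, y⟫) fun _ _ => 1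

abbrev quarticSpace : Submodule ℝ (E → ℝ) := Submodule.span ℝ (Set.range (quarticGenerators e))

instance : FiniteDimensional ℝ (quarticSpace e) :=
  FiniteDimensional.span_of_finite ℝ (Set.finite_range _)

lemma finrank_quarticSpace_le :
    finrank ℝ (quarticSpace e) ≤
      1 + Fintype.card ι + (Fintype.card ι + 1).choose 2 + Fintype.card ι + 1 := by
  have h := finrank_range_le_card (R := ℝ) (quarticGenerators e)
  simp only [Fintype.card_sum, Fintype.card_unit, Sym2.card] at h
  exact h.trans_eq (by ring)

lemma inner_mem_quarticSpace (v : E) : (fun y => ⟪v, y⟫) ∈ quarticSpace e := by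
  have hv : (fun y => ⟪v, y⟫) = ∑ i, ⟪v, e i⟫ • fun y => ⟪e i, y⟫ := by
    ext y; simp [e.sum_inner_mul_inner]
  rw [hv]
  exact Submodule.sum_mem _ fun i _ => Submodule.smul_mem _ _ <|
    Submodule.subset_span ⟨.inr (.inr (.inr (.inl i))), rfl⟩

lemma inner_mul_inner_mem_quarticSpace (v v' : E) :
    (fun y => ⟪v, y⟫ * ⟪v', y⟫) ∈ quarticSpace e := by
  have hv : (fun y => ⟪v, y⟫ * ⟪v', y⟫) =
      ∑ i, ∑ j, (⟪v, e i⟫ * ⟪v', e j⟫) • fun y => ⟪e i, y⟫ * ⟪e j, y⟫ := by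
    ext y
    simp only [Finset.sum_apply, Pi.smul_apply, smul_eq_mul, ← e.sum_inner_mul_inner v y,
      ← e.sum_inner_mul_inner v' y, Finset.sum_mul_sum]
    exact sum_congr rfl fun i _ => sum_congr rfl fun j _ => by ring
  rw [hv]
  exact Submodule.sum_mem _ fun i _ => Submodule.sum_mem _ fun j _ => Submodule.smul_mem _ _ <|
    Submodule.subset_span ⟨.inr (.inr (.inl s(i, j))), rfl⟩

lemma norm_sq_mem_quarticSpace : (fun y : E => ‖y‖ ^ 2) ∈ quarticSpace e := by
  have hv : (fun y : E => ‖y‖ ^ 2) = ∑ i, fun y => ⟪e i, y⟫ * ⟪e i, y⟫ := by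
    ext y
    simp only [Finset.sum_apply, ← real_inner_self_eq_norm_sq, ← e.sum_inner_mul_inner y y,
      real_inner_comm]
  rw [hv]
  exact Submodule.sum_mem _ fun i _ => inner_mul_inner_mem_quarticSpace e (e i) (e i)

lemma norm_sq_mul_inner_mem_quarticSpace (v : E) :
    (fun y => ‖y‖ ^ 2 * ⟪v, y⟫) ∈ quarticSpace e := by
  have hv : (fun y => ‖y‖ ^ 2 * ⟪v, y⟫) = ∑ i, ⟪v, e i⟫ • fun y => ‖y‖ ^ 2 * ⟪e i, y⟫ := by
    ext y
    simp only [Finset.sum_apply, Pi.smul_apply, smul_eq_mul, ← e.sum_inner_mul_inner v y,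
      Finset.mul_sum]
    exact sum_congr rfl fun i _ => by ring
  rw [hv]
  exact Submodule.sum_mem _ fun i _ => Submodule.smul_mem _ _ <|
    Submodule.subset_span ⟨.inr (.inl i), rfl⟩

lemma const_mem_quarticSpace (c : ℝ) : (fun _ : E => c) ∈ quarticSpace e := by
  have h1 : quarticGenerators e (.inr (.inr (.inr (.inr ())))) ∈ quarticSpace e :=
    Submodule.subset_span ⟨_, rfl⟩
  convert Submodule.smul_mem _ c h1 using 1
  ext; simp [quarticGenerators]

lemma sphereQuartic_mem_quarticSpace (x : E) (a b : ℝ) :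
    sphereQuartic x a b ∈ quarticSpace e := by
  have hx : sphereQuartic x a b =
      (fun y => (‖y‖ ^ 2) ^ 2) + (-4 : ℝ) • (fun y => ‖y‖ ^ 2 * ⟪x, y⟫)
      + (2 * ‖x‖ ^ 2 - a ^ 2 - b ^ 2) • (fun y => ‖y‖ ^ 2)
      + (4 : ℝ) • (fun y => ⟪x, y⟫ * ⟪x, y⟫)
      + (-2 * (2 * ‖x‖ ^ 2 - a ^ 2 - b ^ 2)) • (fun y => ⟪x, y⟫)
      + fun _ => (‖x‖ ^ 2 - a ^ 2) * (‖x‖ ^ 2 - b ^ 2) := by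
    ext y
    simp only [sphereQuartic_eq, Pi.add_apply, Pi.smul_apply, smul_eq_mul]
    ring
  rw [hx]
  refine add_mem (add_mem (add_mem (add_mem (add_mem ?_ ?_) ?_) ?_) ?_) ?_
  · exact Submodule.subset_span ⟨.inl (), rfl⟩
  · exact Submodule.smul_mem _ _ (norm_sq_mul_inner_mem_quarticSpace e x)
  · exact Submodule.smul_mem _ _ (norm_sq_mem_quarticSpace e)
  · exact Submodule.smul_mem _ _ (inner_mul_inner_mem_quarticSpace e x x)
  · exact Submodule.smul_mem _ _ (inner_mem_quarticSpace e x)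
  · exact const_mem_quarticSpace e _

end QuarticSpace

section CardBound

variable {E : Type*} [NormedAddCommGroup E] [InnerProductSpace ℝ E]

lemma linearIndependent_sphereQuartic_sum_affine [Nontrivial E] {ι κ : Type*} [Fintype ι]
    [Fintype κ] (e : OrthonormalBasis κ ℝ E) (x : ι → E) (a b : ι → ℝ)
    (ha : ∀ i, a i ≠ 0) (hb : ∀ i, b i ≠ 0)
    (hvanish : ∀ i j, i ≠ j → sphereQuartic (x i) (a i) (b i) (x j) = 0) :
    LinearIndependent ℝ (Sum.elim (fun i => sphereQuartic (x i) (a i) (b i))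
      (Sum.elim (fun (_ : Unit) (_ : E) => (1 : ℝ)) fun k y => ⟪e k, y⟫)) := by
  rw [Fintype.linearIndependent_iff]
  intro g hg
  have h (y : E) : ∑ i, g (.inl i) * sphereQuartic (x i) (a i) (b i) y
      + (g (.inr (.inl ())) + ⟪∑ k, g (.inr (.inr k)) • e k, y⟫) = 0 := by
    simpa [Fintype.sum_sum_type, sum_inner, real_inner_smul_left] using congrFun hg y
  obtain ⟨hl, hc, hw⟩ := eq_zero_of_sum_mul_sphereQuartic_add_inner_eq_zero x a b ha hb hvanish h
  have hk := Fintype.linearIndependent_iff.1 e.orthonormal.linearIndependent _ hw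
  rintro (i | _ | k)
  · exact congrFun hl i
  · exact hc
  · exact hk k

theorem card_le_choose_two_of_forall_dist_eq_or_eq [FiniteDimensional ℝ E] (X : Finset E)
    (hX : ∀ x ∈ X, ∃ a b : ℝ, a ≠ 0 ∧ b ≠ 0 ∧ ∀ y ∈ X, y ≠ x → dist x y = a ∨ dist x y = b) :
    #X ≤ (finrank ℝ E + 2).choose 2 := by
  rcases subsingleton_or_nontrivial E with _ | _
  · simpa [finrank_zero_of_subsingleton] using X.card_le_one_of_subsingleton
  choose! a b ha hb hab using hX
  set e := stdOrthonormalBasis ℝ E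
  have hli := linearIndependent_sphereQuartic_sum_affine e (fun x : X => (x : E))
    (fun x => a x) (fun x => b x) (fun x => ha x x.2) (fun x => hb x x.2)
    fun x y hxy => sphereQuartic_eq_zero (hab x x.2 y y.2 (Subtype.coe_injective.ne hxy.symm))
  have hmem : Set.range (Sum.elim (fun x : X => sphereQuartic (x : E) (a x) (b x))
      (Sum.elim (fun (_ : Unit) (_ : E) => (1 : ℝ)) fun k y => ⟪e k, y⟫)) ⊆ quarticSpace e := by
    rintro _ ⟨x | _ | k, rfl⟩
    · exact sphereQuartic_mem_quarticSpace e _ _ _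
    · exact const_mem_quarticSpace e 1
    · exact inner_mem_quarticSpace e (e k)
  have hcard := (finrank_span_eq_card hli).symm.trans_le
    ((Submodule.finrank_mono (Submodule.span_le.2 hmem)).trans (finrank_quarticSpace_le e))
  simp only [Fintype.card_sum, Fintype.card_coe, Fintype.card_unit, Fintype.card_fin] at hcard
  rw [Nat.choose_succ_succ' _ 1, Nat.choose_one_right, one_add_one_eq_two]
  omega

end CardBound

lemma exists_forall_dist_eq_or_eq_of_card_distancesFrom_le_two {d : ℕ}
    {X : Finset (EuclideanSpace ℝ (Fin d))} {x : EuclideanSpace ℝ (Fin d)}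
    (hx : #(distancesFrom X x) ≤ 2) :
    ∃ a b : ℝ, a ≠ 0 ∧ b ≠ 0 ∧ ∀ y ∈ X, y ≠ x → dist x y = a ∨ dist x y = b := by
  have hpos : ∀ r ∈ distancesFrom X x, r ≠ 0 := by
    simp only [distancesFrom, mem_image, mem_erase]
    rintro _ ⟨y, ⟨hyx, -⟩, rfl⟩
    exact dist_ne_zero.2 (Ne.symm hyx)
  obtain ⟨a, b, ha, hb, hab⟩ :=
    Finset.exists_forall_eq_or_eq_of_card_le_two hx hpos ⟨1, one_ne_zero⟩
  exact ⟨a, b, ha, hb, fun y hy hyx => hab _ (mem_image_of_mem _ (mem_erase.2 ⟨hyx, hy⟩))⟩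

/-- Every locally two-distance set in `ℝ^d` has at most `binom(d+2, 2)` points. -/
theorem stmt4 (d : ℕ) (X : Finset (EuclideanSpace ℝ (Fin d)))
    (hloc : ∀ x ∈ X, (distancesFrom X x).card ≤ 2) :
    X.card ≤ (d + 2).choose 2 := by
  simpa using card_le_choose_two_of_forall_dist_eq_or_eq X
    fun x hx => exists_forall_dist_eq_or_eq_of_card_distancesFrom_le_two (hloc x hx)
end

section
/- Every locally two-distance set in ℝ^d with at least d(d+1)/2 + 3 points is a two-distance set. -/
open scoped Classical

/-- `A(X)`: the set of distances between distinct points of `X`. -/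
noncomputable def distSet {d : ℕ} (X : Finset (EuclideanSpace ℝ (Fin d))) : Finset ℝ :=
  X.offDiag.image (fun p => dist p.1 p.2)

/-
Split `X` into blocks such that every point of a block is equidistant from all points of any
other block: by the sets `A_X(x)` when no distance is common to all of them (they then form a
triangle `{p, q}, {q, c}, {p, c}`), by the second distance next to a common distance `a`, or,
for a one-distance set, into two single points and the rest. Equidistance makes the vector spans of
distinct blocks orthogonal, so their dimensions add up to at most `d`, and puts each block on a
sphere. A spherical two-distance set of affine dimension `q ≥ 1` has at most `q(q+3)/2` points:
the functions `t ↦ (‖t - x‖² - α²)(‖t - x‖² - β²)` are independent and are quadratic in `q`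
affine coordinates, with one square eliminated by the sphere equation. Summing over the blocks
gives `2|X| ≤ d(d+1) + 4`.
-/

open Finset Module Metric
open EuclideanGeometry (Cospherical)
open scoped RealInnerProductSpace

theorem card_le_finrank_of_diagonal {K ι : Type*} [Field K] [Fintype ι]
    (W : Submodule K (ι → K)) (F : ι → ι → K) (hW : ∀ i, F i ∈ W) (hdiag : ∀ i, F i i ≠ 0)
    (hoff : ∀ i j, i ≠ j → F i j = 0) : Fintype.card ι ≤ finrank K W := by
  have hsingle : ∀ i, Pi.single i 1 ∈ W := by
    intro i
    have : Pi.single i 1 = (F i i)⁻¹ • F i := by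
      ext j
      by_cases hj : j = i
      · subst hj; simp [hdiag]
      · simp [hj, hoff i j (Ne.symm hj)]
    rw [this]
    exact W.smul_mem _ (hW i)
  have hW : W = ⊤ := by
    rw [eq_top_iff, ← (Pi.basisFun K ι).span_eq, Submodule.span_le]
    rintro _ ⟨i, rfl⟩
    simpa using hsingle i
  rw [hW, finrank_top, finrank_fintype_fun_eq_card]

theorem prod_mem_mul_self_of_card_le_two {R B ι : Type*} [CommSemiring R] [CommSemiring B]
    [Algebra R B] {A : Submodule R B} (h1 : (1 : B) ∈ A) {S : Finset ι} (hS : #S ≤ 2)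
    {f : ι → B} (hf : ∀ i ∈ S, f i ∈ A) : ∏ i ∈ S, f i ∈ A * A := by
  obtain h | h | h : #S = 0 ∨ #S = 1 ∨ #S = 2 := by omega
  · rw [card_eq_zero.mp h, prod_empty, ← mul_one 1]
    exact Submodule.mul_mem_mul h1 h1
  · obtain ⟨a, rfl⟩ := card_eq_one.mp h
    rw [prod_singleton, ← mul_one (f a)]
    exact Submodule.mul_mem_mul (hf a (mem_singleton_self a)) h1
  · obtain ⟨a, b, hab, rfl⟩ := card_eq_two.mp h
    rw [prod_pair hab]
    exact Submodule.mul_mem_mul (hf a (by simp)) (hf b (by simp))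

theorem finrank_span_mul_span_le_of_sum_mul_self_mem {K B : Type*} [Field K] [CommRing B]
    [Algebra K B] {q : ℕ} (hq : 0 < q) (M : Fin q → B)
    (hsq : ∑ i, M i * M i ∈ Submodule.span K (insert 1 (Set.range M))) :
    finrank K (Submodule.span K (insert 1 (Set.range M)) *
      Submodule.span K (insert 1 (Set.range M))) ≤ (q + 2).choose 2 - 1 := by
  set A := Submodule.span K (insert 1 (Set.range M))
  let N : Option (Fin q) → B := fun u => u.elim 1 M
  have hA : A = Submodule.span K (Set.range N) := by rw [Option.range_elim]
  -- `Sym2 (Option (Fin q))` indexes the products `1`, `M i` and `M i * M j`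
  let G : Sym2 (Option (Fin q)) → B := Sym2.lift ⟨fun u v => N u * N v, fun _ _ => mul_comm _ _⟩
  let i₀ : Fin q := ⟨0, hq⟩
  let W := Submodule.span K (((univ.erase s(some i₀, some i₀)).image G : Finset B) : Set B)
  have hG : ∀ u v, s(u, v) ≠ s(some i₀, some i₀) → N u * N v ∈ W := fun u v h =>
    Submodule.subset_span (mem_image.mpr ⟨s(u, v), mem_erase.mpr ⟨h, mem_univ _⟩, rfl⟩)
  have hAW : A ≤ W := by
    rw [hA, Submodule.span_le]
    rintro _ ⟨u, rfl⟩
    simpa [N] using hG u none (by simp)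
  -- the relation `hsq` makes the generator `M i₀ * M i₀` redundant
  have hNN : ∀ u v, N u * N v ∈ W := by
    intro u v
    by_cases h : s(u, v) = s(some i₀, some i₀)
    · obtain ⟨rfl, rfl⟩ : u = some i₀ ∧ v = some i₀ := by simpa using h
      have : N (some i₀) * N (some i₀)
          = ∑ i, M i * M i - ∑ i ∈ univ.erase i₀, N (some i) * N (some i) := by
        rw [← add_sum_erase _ _ (mem_univ i₀)]; simp [N]
      rw [this]
      exact sub_mem (hAW hsq) (sum_mem fun i hi => hG _ _ (by simpa using ne_of_mem_erase hi))
    · exact hG u v h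
  have hAA : A * A ≤ W := by
    rw [hA, Submodule.span_mul_span, Submodule.span_le]
    rintro _ ⟨_, ⟨u, rfl⟩, _, ⟨v, rfl⟩, rfl⟩
    exact hNN u v
  calc finrank K ↥(A * A) ≤ finrank K W := Submodule.finrank_mono hAA
    _ ≤ #((univ.erase s(some i₀, some i₀)).image G) := finrank_span_finset_le_card _
    _ ≤ #(univ.erase s(some i₀, some i₀)) := card_image_le
    _ = (q + 2).choose 2 - 1 := by
      rw [card_erase_of_mem (mem_univ _), card_univ, Sym2.card, Fintype.card_option,
        Fintype.card_fin]

theorem sum_mul_add_three_le_sum_mul_add_three {ι : Type*} (s : Finset ι) (q : ι → ℕ) :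
    ∑ i ∈ s, q i * (q i + 3) ≤ (∑ i ∈ s, q i) * (∑ i ∈ s, q i + 3) := by
  induction s using Finset.induction_on with
  | empty => simp
  | insert j s hj ih =>
    rw [sum_insert hj, sum_insert hj]
    nlinarith [Nat.zero_le (q j * ∑ i ∈ s, q i)]

theorem sum_mul_add_three_le {ι : Type*} {s : Finset ι} {q : ι → ℕ} (hs : 2 ≤ #s)
    (hq : ∀ i ∈ s, 0 < q i) :
    ∑ i ∈ s, q i * (q i + 3) ≤ (∑ i ∈ s, q i) * (∑ i ∈ s, q i + 1) + 2 := by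
  obtain ⟨j, hj⟩ := card_pos.mp (by omega : 0 < #s)
  have hrest : 0 < ∑ i ∈ s.erase j, q i := sum_pos (fun i hi => hq i (mem_of_mem_erase hi))
    (card_pos.mp (by rw [card_erase_of_mem hj]; omega))
  have hsuper := sum_mul_add_three_le_sum_mul_add_three (s.erase j) q
  rw [← add_sum_erase s _ hj, ← add_sum_erase s _ hj]
  nlinarith [hq j hj]

theorem eq_pair_of_mem {α : Type*} {S : Finset α} {a b : α} (hS : #S ≤ 2) (ha : a ∈ S)
    (hb : b ∈ S) (hab : a ≠ b) : S = {a, b} :=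
  (eq_of_subset_of_card_le (by simp [insert_subset_iff, ha, hb])
    (by rw [card_pair hab]; exact hS)).symm

theorem card_inter_le_one_of_ne {α : Type*} {S T : Finset α} (hS : #S = 2) (hT : #T = 2)
    (hST : S ≠ T) : #(S ∩ T) ≤ 1 := by
  by_contra hc
  have h1 : S ∩ T = S := eq_of_subset_of_card_le inter_subset_left (by omega)
  have h2 : S ∩ T = T := eq_of_subset_of_card_le inter_subset_right (by omega)
  exact hST (h1.symm.trans h2)

theorem card_eq_three_of_intersecting {α : Type*} {F : Finset (Finset α)} (hF : F.Nonempty)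
    (h₂ : ∀ S ∈ F, #S = 2) (hint : (F : Set (Finset α)).Intersecting)
    (hcommon : ∀ a, ∃ S ∈ F, a ∉ S) : #F = 3 := by
  have hmeet : ∀ S ∈ F, ∀ a b, {a, b} ∈ F → a ∈ S ∨ b ∈ S := fun S hS a b hab => by
    simpa using not_disjoint_iff.mp (hint hab hS)
  obtain ⟨S₁, hS₁⟩ := hF
  obtain ⟨p, q, hpq, rfl⟩ := card_eq_two.mp (h₂ S₁ hS₁)
  obtain ⟨S₂, hS₂, hp₂⟩ := hcommon p
  have hq₂ : q ∈ S₂ := (hmeet S₂ hS₂ p q hS₁).resolve_left hp₂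
  obtain ⟨c, hqc, rfl⟩ : ∃ c, q ≠ c ∧ S₂ = {q, c} := by
    obtain ⟨u, v, huv, rfl⟩ := card_eq_two.mp (h₂ S₂ hS₂)
    rcases mem_insert.mp hq₂ with rfl | hv
    · exact ⟨v, huv, rfl⟩
    · rw [mem_singleton.mp hv, pair_comm]; exact ⟨u, huv.symm, rfl⟩
  have hpc : p ≠ c := by rintro rfl; simp at hp₂
  obtain ⟨S₃, hS₃, hq₃⟩ := hcommon q
  have hp₃ : p ∈ S₃ := (hmeet S₃ hS₃ p q hS₁).resolve_right hq₃
  have hc₃ : c ∈ S₃ := (hmeet S₃ hS₃ q c hS₂).resolve_left hq₃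
  obtain rfl : S₃ = {p, c} := eq_pair_of_mem (h₂ S₃ hS₃).le hp₃ hc₃ hpc
  -- a pair meeting `{p, q}`, `{q, c}` and `{p, c}` is one of them
  have hF : F = {{p, q}, {q, c}, {p, c}} := by
    ext S
    constructor
    · intro hS
      have hS2 := (h₂ S hS).le
      by_cases hp : p ∈ S
      · by_cases hq : q ∈ S
        · simp [eq_pair_of_mem hS2 hp hq hpq]
        · simp [eq_pair_of_mem hS2 hp ((hmeet S hS q c hS₂).resolve_left hq) hpc]
      · simp [eq_pair_of_mem hS2 ((hmeet S hS p q hS₁).resolve_left hp)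
          ((hmeet S hS p c hS₃).resolve_left hp) hqc]
    · intro hS
      simp only [mem_insert, mem_singleton] at hS
      rcases hS with rfl | rfl | rfl <;> assumption
  rw [hF, card_eq_three]
  refine ⟨_, _, _, ?_, ?_, ?_, rfl⟩ <;> intro h
  · simpa [hpq, hpc] using congrArg (p ∈ ·) h
  · simpa [hpq.symm, hqc] using congrArg (q ∈ ·) h
  · simpa [hpq.symm, hqc] using congrArg (q ∈ ·) h

section Geometry

variable {E : Type*} [NormedAddCommGroup E] [InnerProductSpace ℝ E]

noncomputable def affineDim (s : Finset E) : ℕ :=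
  finrank ℝ (vectorSpan ℝ (s : Set E))

instance (s : Finset E) : FiniteDimensional ℝ (vectorSpan ℝ (s : Set E)) :=
  finiteDimensional_vectorSpan_of_finite ℝ s.finite_toSet

theorem affineDim_mono {s t : Finset E} (h : s ⊆ t) : affineDim s ≤ affineDim t :=
  Submodule.finrank_mono (vectorSpan_mono ℝ (coe_subset.mpr h))

theorem affineDim_le_finrank [FiniteDimensional ℝ E] (s : Finset E) :
    affineDim s ≤ finrank ℝ E :=
  Submodule.finrank_le _

theorem affineDim_pos_iff {s : Finset E} : 0 < affineDim s ↔ s.Nontrivial := by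
  rw [affineDim, finrank_pos_iff, Submodule.nontrivial_iff_ne_bot, Ne,
    vectorSpan_eq_bot_iff_subsingleton, Set.not_subsingleton_iff]

theorem vectorSpan_isOrtho_of_subset_sphere {s t : Set E}
    (h : ∀ y ∈ t, ∃ r, s ⊆ sphere y r) : vectorSpan ℝ s ⟂ vectorSpan ℝ t := by
  rw [vectorSpan_def, vectorSpan_def, Submodule.isOrtho_span]
  rintro _ ⟨x, hx, x', hx', rfl⟩ _ ⟨y, hy, y', hy', rfl⟩
  obtain ⟨r, hr⟩ := h y hy
  obtain ⟨r', hr'⟩ := h y' hy'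
  rw [real_inner_comm]
  refine EuclideanGeometry.inner_vsub_vsub_of_dist_eq_of_dist_eq ?_ ?_
  · rw [mem_sphere.mp (hr' hx), mem_sphere.mp (hr' hx')]
  · rw [mem_sphere.mp (hr hx), mem_sphere.mp (hr hx')]

theorem affineDim_add_le_of_subset_sphere [DecidableEq E] {s t : Finset E}
    (h : ∀ y ∈ t, ∃ r, (s : Set E) ⊆ sphere y r) :
    affineDim s + affineDim t ≤ affineDim (s ∪ t) := by
  have hdisj := (vectorSpan_isOrtho_of_subset_sphere h).disjoint
  rw [affineDim, affineDim, ← Submodule.finrank_sup_add_finrank_inf_eq, hdisj.eq_bot,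
    finrank_bot, add_zero]
  exact Submodule.finrank_mono
    (sup_le (vectorSpan_mono ℝ (by simp)) (vectorSpan_mono ℝ (by simp)))

theorem sum_affineDim_le_affineDim_biUnion [DecidableEq E] {ι : Type*} {s : Finset ι}
    {K : ι → Finset E}
    (h : ∀ i ∈ s, ∀ j ∈ s, i ≠ j → ∀ y ∈ K j, ∃ r, (K i : Set E) ⊆ sphere y r) :
    ∑ i ∈ s, affineDim (K i) ≤ affineDim (s.biUnion K) := by
  induction s using Finset.induction_on with
  | empty => simp
  | insert j s hj ih =>
    rw [sum_insert hj, biUnion_insert]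
    have ih' := ih fun i hi k hk => h i (mem_insert_of_mem hi) k (mem_insert_of_mem hk)
    refine (Nat.add_le_add_left ih' _).trans (affineDim_add_le_of_subset_sphere fun y hy => ?_)
    obtain ⟨i, hi, hyi⟩ := mem_biUnion.mp hy
    exact h j (mem_insert_self j s) i (mem_insert_of_mem hi) (by rintro rfl; exact hj hi) y hyi

theorem OrthonormalBasis.inner_eq_sum_of_mem {ι : Type*} [Fintype ι] {V : Submodule ℝ E}
    (b : OrthonormalBasis ι ℝ V) {v : E} (hv : v ∈ V) (w : E) :
    ⟪v, w⟫ = ∑ i, ⟪(b i : E), v⟫ * ⟪(b i : E), w⟫ := by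
  have := congrArg Subtype.val (b.sum_repr' ⟨v, hv⟩)
  simp only [Submodule.coe_sum, Submodule.coe_smul, Submodule.coe_inner] at this
  conv_lhs => rw [← this]
  simp [sum_inner, real_inner_smul_left]

theorem exists_coordinates_of_cospherical {C : Finset E} (hsph : Cospherical (C : Set E))
    (hC : C.Nonempty) : ∃ M : Fin (affineDim C) → C → ℝ,
      (∀ x ∈ C, (fun t : C => ‖(t : E) - x‖ ^ 2) ∈ Submodule.span ℝ (insert 1 (Set.range M))) ∧
      ∑ i, M i * M i ∈ Submodule.span ℝ (insert 1 (Set.range M)) := by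
  obtain ⟨y₀, r, hr⟩ := hsph
  obtain ⟨x₀, hx₀⟩ := hC
  let b : OrthonormalBasis (Fin (affineDim C)) ℝ (vectorSpan ℝ (C : Set E)) :=
    stdOrthonormalBasis ℝ _
  let M : Fin (affineDim C) → C → ℝ := fun i t => ⟪(b i : E), t - x₀⟫
  have expand : ∀ t : C, ∀ w : E, ⟪(t : E) - x₀, w⟫ = ∑ i, M i t * ⟪(b i : E), w⟫ :=
    fun t => b.inner_eq_sum_of_mem (vsub_mem_vectorSpan ℝ t.2 hx₀)
  -- both `t` and `x` lie on the sphere, so `‖t - x‖²` is affine in `t`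
  have hdsq : ∀ x ∈ C, (fun t : C => ‖(t : E) - x‖ ^ 2)
      = (2 * r ^ 2 - 2 * ⟪x₀ - y₀, x - y₀⟫) • 1 + ∑ i, (-2 * ⟪(b i : E), x - y₀⟫) • M i := by
    intro x hx
    funext t
    have ht : ‖(t : E) - y₀‖ = r := by rw [← dist_eq_norm]; exact hr t t.2
    have hx' : ‖x - y₀‖ = r := by rw [← dist_eq_norm]; exact hr x hx
    have e1 : ‖(t : E) - x‖ ^ 2 = ‖(t : E) - y₀‖ ^ 2 - 2 * ⟪(t : E) - y₀, x - y₀⟫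
        + ‖x - y₀‖ ^ 2 := by rw [← norm_sub_sq_real]; congr 2; abel
    have e2 : ⟪(t : E) - y₀, x - y₀⟫ = ⟪(t : E) - x₀, x - y₀⟫ + ⟪x₀ - y₀, x - y₀⟫ := by
      rw [← inner_add_left]; congr 1; abel
    have hsum : ∑ i, -2 * ⟪(b i : E), x - y₀⟫ * M i t
        = -2 * ∑ i, M i t * ⟪(b i : E), x - y₀⟫ := by
      rw [mul_sum]; exact sum_congr rfl fun i _ => by ring
    simp only [Pi.add_apply, Pi.smul_apply, Finset.sum_apply, smul_eq_mul, Pi.one_apply, mul_one]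
    rw [e1, e2, expand, ht, hx', hsum]
    ring
  have hmem : ∀ x ∈ C,
      (fun t : C => ‖(t : E) - x‖ ^ 2) ∈ Submodule.span ℝ (insert 1 (Set.range M)) := by
    intro x hx
    rw [hdsq x hx]
    exact add_mem (Submodule.smul_mem _ _ (Submodule.subset_span (Set.mem_insert _ _)))
      (sum_mem fun i _ => Submodule.smul_mem _ _
        (Submodule.subset_span (Set.mem_insert_of_mem _ ⟨i, rfl⟩)))
  refine ⟨M, hmem, ?_⟩
  convert hmem x₀ hx₀ using 1
  funext t
  simp only [Finset.sum_apply, Pi.mul_apply]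
  rw [← real_inner_self_eq_norm_sq, expand]

theorem two_mul_card_le_of_cospherical {C : Finset E} {D : Finset ℝ} (hD : #D ≤ 2)
    (hdist : ∀ x ∈ C, ∀ y ∈ C, x ≠ y → dist x y ∈ D) (hsph : Cospherical (C : Set E))
    (hrk : 0 < affineDim C) : 2 * #C ≤ affineDim C * (affineDim C + 3) := by
  obtain ⟨M, hdsq, hsq⟩ :=
    exists_coordinates_of_cospherical hsph (affineDim_pos_iff.mp hrk).nonempty
  set A := Submodule.span ℝ (insert 1 (Set.range M))
  have h1A : (1 : C → ℝ) ∈ A := Submodule.subset_span (Set.mem_insert _ _)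
  let F : C → C → ℝ := fun x => ∏ δ ∈ D.erase 0, ((fun t : C => ‖(t : E) - x‖ ^ 2) - δ ^ 2 • 1)
  have hFA : ∀ x, F x ∈ A * A := fun x => prod_mem_mul_self_of_card_le_two h1A
    (card_erase_le.trans hD) fun δ _ => sub_mem (hdsq x x.2) (Submodule.smul_mem _ _ h1A)
  have hdiag : ∀ x, F x x ≠ 0 := by
    intro x
    simp only [F, prod_apply, Pi.sub_apply, Pi.smul_apply, Pi.one_apply, sub_self,
      norm_zero, smul_eq_mul, mul_one]
    exact prod_ne_zero_iff.mpr fun δ hδ => by simpa using ne_of_mem_erase hδ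
  have hoff : ∀ x t, x ≠ t → F x t = 0 := by
    intro x t hxt
    have hne : (t : E) ≠ x := fun h => hxt (Subtype.ext h).symm
    simp only [F, prod_apply, Pi.sub_apply, Pi.smul_apply, Pi.one_apply, smul_eq_mul, mul_one]
    refine prod_eq_zero (i := dist (t : E) x)
      (mem_erase.mpr ⟨dist_ne_zero.mpr hne, hdist _ t.2 _ x.2 hne⟩) ?_
    rw [dist_eq_norm, sub_self]
  have hcard := (card_le_finrank_of_diagonal (A * A) F hFA hdiag hoff).trans
    (finrank_span_mul_span_le_of_sum_mul_self_mem hrk M hsq)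
  rw [Fintype.card_coe, Nat.choose_two_right] at hcard
  have : (affineDim C + 2) * (affineDim C + 2 - 1) / 2 * 2
      = affineDim C * (affineDim C + 3) + 2 := by
    rw [Nat.div_mul_cancel (Nat.even_mul_pred_self (affineDim C + 2)).two_dvd,
      show affineDim C + 2 - 1 = affineDim C + 1 by omega]
    ring
  omega

structure IsTwoDistanceBlocks {ι : Type*} (s : Finset ι) (K : ι → Finset E) : Prop where
  pairwiseDisjoint : (s : Set ι).PairwiseDisjoint K
  subset_sphere : ∀ i ∈ s, ∀ j ∈ s, i ≠ j → ∀ y ∈ K j, ∃ r, (K i : Set E) ⊆ sphere y r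
  two_distance : ∀ i ∈ s, ∃ D : Finset ℝ, #D ≤ 2 ∧ ∀ x ∈ K i, ∀ y ∈ K i, x ≠ y → dist x y ∈ D

namespace IsTwoDistanceBlocks

variable {ι : Type*} {s : Finset ι} {K : ι → Finset E}

theorem card_le_one_or_two_mul_card_le (h : IsTwoDistanceBlocks s K) {i j : ι} (hi : i ∈ s)
    (hj : j ∈ s) (hij : i ≠ j) (hKj : (K j).Nonempty) :
    affineDim (K i) = 0 ∧ #(K i) ≤ 1 ∨
      0 < affineDim (K i) ∧ 2 * #(K i) ≤ affineDim (K i) * (affineDim (K i) + 3) := by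
  rcases Nat.eq_zero_or_pos (affineDim (K i)) with h0 | hpos
  · refine Or.inl ⟨h0, ?_⟩
    by_contra hcard
    have := affineDim_pos_iff.mpr (one_lt_card_iff_nontrivial.mp (not_le.mp hcard))
    omega
  · obtain ⟨D, hD, hdist⟩ := h.two_distance i hi
    obtain ⟨y, hy⟩ := hKj
    obtain ⟨r, hr⟩ := h.subset_sphere i hi j hj hij y hy
    exact Or.inr ⟨hpos, two_mul_card_le_of_cospherical hD hdist ⟨y, r, hr⟩ hpos⟩

theorem two_mul_card_biUnion_le [DecidableEq E] (h : IsTwoDistanceBlocks s K) (hs : 2 ≤ #s)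
    (hK : ∀ i ∈ s, (K i).Nontrivial) :
    2 * #(s.biUnion K) ≤ affineDim (s.biUnion K) * (affineDim (s.biUnion K) + 1) + 2 := by
  have hbound : ∀ i ∈ s, 0 < affineDim (K i) ∧
      2 * #(K i) ≤ affineDim (K i) * (affineDim (K i) + 3) := by
    intro i hi
    obtain ⟨j, hj, hji⟩ := exists_mem_ne (by omega : 1 < #s) i
    have hpos := affineDim_pos_iff.mpr (hK i hi)
    rcases h.card_le_one_or_two_mul_card_le hi hj hji.symm (hK j hj).nonempty with h0 | h1
    · omega
    · exact h1
  have hsum := sum_affineDim_le_affineDim_biUnion h.subset_sphere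
  calc 2 * #(s.biUnion K) = ∑ i ∈ s, 2 * #(K i) := by
        rw [card_biUnion h.pairwiseDisjoint, mul_sum]
    _ ≤ ∑ i ∈ s, affineDim (K i) * (affineDim (K i) + 3) := sum_le_sum fun i hi => (hbound i hi).2
    _ ≤ (∑ i ∈ s, affineDim (K i)) * (∑ i ∈ s, affineDim (K i) + 1) + 2 :=
        sum_mul_add_three_le hs fun i hi => (hbound i hi).1
    _ ≤ _ := by gcongr

theorem two_mul_card_biUnion_le_of_card_eq_three [DecidableEq E] (h : IsTwoDistanceBlocks s K)
    (hs : #s = 3) (hK : ∀ i ∈ s, (K i).Nonempty) :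
    2 * #(s.biUnion K) ≤ affineDim (s.biUnion K) * (affineDim (s.biUnion K) + 1) + 4 := by
  -- the union of the other two blocks has two distinct points and is orthogonal to `K i`
  have hdim : ∀ i ∈ s, ∀ j ∈ s, ∀ k ∈ s, i ≠ j → i ≠ k → j ≠ k →
      affineDim (K i) + 1 ≤ affineDim (s.biUnion K) := by
    intro i hi j hj k hk hij hik hjk
    obtain ⟨y, hy⟩ := hK j hj
    obtain ⟨z, hz⟩ := hK k hk
    have hyz : y ≠ z := fun hyz => disjoint_left.mp (h.pairwiseDisjoint hj hk hjk) hy (hyz ▸ hz)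
    have hpos := affineDim_pos_iff.mpr
      ⟨y, mem_union_left _ hy, z, mem_union_right _ hz, hyz⟩
    have hadd := affineDim_add_le_of_subset_sphere (s := K i) (t := K j ∪ K k) fun w hw => by
      rcases mem_union.mp hw with hw | hw
      exacts [h.subset_sphere i hi j hj hij w hw, h.subset_sphere i hi k hk hik w hw]
    have hsub : K i ∪ (K j ∪ K k) ⊆ s.biUnion K := union_subset (subset_biUnion_of_mem K hi)
      (union_subset (subset_biUnion_of_mem K hj) (subset_biUnion_of_mem K hk))
    have := affineDim_mono hsub
    omega
  have hsum := sum_affineDim_le_affineDim_biUnion h.subset_sphere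
  have hbound : ∀ i ∈ s, ∀ j ∈ s, i ≠ j → _ := fun i hi j hj hij =>
    h.card_le_one_or_two_mul_card_le hi hj hij (hK j hj)
  obtain ⟨i, j, k, hij, hik, hjk, rfl⟩ := card_eq_three.mp hs
  have hi : i ∈ ({i, j, k} : Finset ι) := by simp
  have hj : j ∈ ({i, j, k} : Finset ι) := by simp
  have hk : k ∈ ({i, j, k} : Finset ι) := by simp
  have hdi := hdim i hi j hj k hk hij hik hjk
  have hdj := hdim j hj i hi k hk hij.symm hjk hik
  have hdk := hdim k hk i hi j hj hik.symm hjk.symm hij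
  rw [card_biUnion h.pairwiseDisjoint]
  rw [sum_insert (by simp [hij, hik]), sum_pair hjk] at hsum ⊢
  set D := affineDim (({i, j, k} : Finset ι).biUnion K)
  rcases hbound i hi j hj hij with ⟨hqi, hni⟩ | ⟨hqi, hni⟩ <;>
    rcases hbound j hj i hi hij.symm with ⟨hqj, hnj⟩ | ⟨hqj, hnj⟩ <;>
    rcases hbound k hk i hi hik.symm with ⟨hqk, hnk⟩ | ⟨hqk, hnk⟩ <;>
    nlinarith

end IsTwoDistanceBlocks

end Geometry

section LocallyTwoDistance

variable {d : ℕ} {X : Finset (EuclideanSpace ℝ (Fin d))}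

theorem dist_mem_distancesFrom {x y : EuclideanSpace ℝ (Fin d)} (hy : y ∈ X) (hyx : y ≠ x) :
    dist x y ∈ distancesFrom X x :=
  mem_image_of_mem _ (mem_erase.mpr ⟨hyx, hy⟩)

theorem dist_mem_inter_distancesFrom {x y : EuclideanSpace ℝ (Fin d)} (hx : x ∈ X) (hy : y ∈ X)
    (hxy : x ≠ y) : dist x y ∈ distancesFrom X x ∩ distancesFrom X y :=
  mem_inter.mpr ⟨dist_mem_distancesFrom hy hxy.symm, dist_comm y x ▸ dist_mem_distancesFrom hx hxy⟩

theorem mem_distSet {u : ℝ} : u ∈ distSet X ↔ ∃ x ∈ X, ∃ y ∈ X, x ≠ y ∧ dist x y = u := by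
  simp [distSet, and_assoc]

theorem distancesFrom_subset_distSet {x : EuclideanSpace ℝ (Fin d)} (hx : x ∈ X) :
    distancesFrom X x ⊆ distSet X := by
  intro u hu
  obtain ⟨y, hy, rfl⟩ := mem_image.mp hu
  exact mem_distSet.mpr ⟨x, hx, y, (mem_erase.mp hy).2, (mem_erase.mp hy).1.symm, rfl⟩

theorem affineDim_le_dim (X : Finset (EuclideanSpace ℝ (Fin d))) : affineDim X ≤ d :=
  (affineDim_le_finrank X).trans_eq finrank_euclideanSpace_fin

theorem isTwoDistanceBlocks_fiber {ι : Type*} [DecidableEq ι] {f : EuclideanSpace ℝ (Fin d) → ι}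
    {D : ι → Finset ℝ} {s : Finset ι} (hD : ∀ x ∈ X, distancesFrom X x ⊆ D (f x))
    (hD₂ : ∀ i ∈ s, #(D i) ≤ 2) (hDD : ∀ i ∈ s, ∀ j ∈ s, i ≠ j → #(D i ∩ D j) ≤ 1) :
    IsTwoDistanceBlocks s fun i => X.filter (f · = i) := by
  refine ⟨Set.pairwiseDisjoint_filter f _ X, fun i hi j hj hij y hy => ?_, fun i hi => ?_⟩
  · obtain ⟨r, hr⟩ := card_le_one_iff_subset_singleton.mp (hDD i hi j hj hij)
    refine ⟨r, fun x hx => mem_sphere.mpr ?_⟩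
    obtain ⟨hxX, rfl⟩ := mem_filter.mp (mem_coe.mp hx)
    obtain ⟨hyX, rfl⟩ := mem_filter.mp hy
    have hxy : x ≠ y := by rintro rfl; exact hij rfl
    exact mem_singleton.mp
      (hr (inter_subset_inter (hD x hxX) (hD y hyX) (dist_mem_inter_distancesFrom hxX hyX hxy)))
  · refine ⟨D i, hD₂ i hi, fun x hx y hy hxy => ?_⟩
    obtain ⟨hxX, rfl⟩ := mem_filter.mp hx
    exact hD x hxX (dist_mem_distancesFrom (mem_filter.mp hy).1 hxy.symm)

theorem two_mul_card_le_of_card_distSet_le_one (h : #(distSet X) ≤ 1) :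
    2 * #X ≤ affineDim X * (affineDim X + 1) + 4 := by
  rcases le_or_gt #X 2 with hX | hX
  · exact le_add_left (by omega)
  obtain ⟨x₀, hx₀, x₁, hx₁, x₂, hx₂, h₀₁, h₀₂, h₁₂⟩ := two_lt_card.mp hX
  -- any three points cut a one-distance set into three mutually equidistant blocks
  let f : EuclideanSpace ℝ (Fin d) → Fin 3 := fun x => if x = x₀ then 0 else if x = x₁ then 1 else 2
  have hblocks := isTwoDistanceBlocks_fiber (f := f) (D := fun _ => distSet X) (s := univ)
    (fun x hx => distancesFrom_subset_distSet hx) (fun _ _ => by omega)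
    (fun _ _ _ _ _ => (card_le_card inter_subset_left).trans h)
  have hne : ∀ i ∈ (univ : Finset (Fin 3)), (X.filter (f · = i)).Nonempty := by
    intro i _
    fin_cases i
    · exact ⟨x₀, mem_filter.mpr ⟨hx₀, by simp [f]⟩⟩
    · exact ⟨x₁, mem_filter.mpr ⟨hx₁, by simp [f, h₀₁.symm]⟩⟩
    · exact ⟨x₂, mem_filter.mpr ⟨hx₂, by simp [f, h₀₂.symm, h₁₂.symm]⟩⟩
  have := hblocks.two_mul_card_biUnion_le_of_card_eq_three (card_fin 3) hne
  rwa [biUnion_filter_eq_of_maps_to fun x _ => mem_univ (f x)] at this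

theorem two_mul_card_le_of_forall_mem_distancesFrom
    (hloc : ∀ x ∈ X, #(distancesFrom X x) ≤ 2) (h3 : 3 ≤ #(distSet X)) {a : ℝ}
    (ha : ∀ x ∈ X, a ∈ distancesFrom X x) :
    2 * #X ≤ affineDim X * (affineDim X + 1) + 2 := by
  set B := (distSet X).erase a
  have hB : 2 ≤ #B := le_trans (by omega) pred_card_le_card_erase
  have hlabel : ∀ x ∈ X, ∃ b ∈ B, distancesFrom X x ⊆ {a, b} := by
    intro x hx
    by_cases hb : ∃ b ∈ distancesFrom X x, b ≠ a
    · obtain ⟨b, hb, hba⟩ := hb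
      exact ⟨b, mem_erase.mpr ⟨hba, distancesFrom_subset_distSet hx hb⟩,
        (eq_pair_of_mem (hloc x hx) (ha x hx) hb hba.symm).le⟩
    · push Not at hb
      obtain ⟨b, hb'⟩ := card_pos.mp (by omega : 0 < #B)
      exact ⟨b, hb', fun u hu => by simp [hb u hu]⟩
  choose! π hπB hπ using hlabel
  have hfiber : ∀ b ∈ B, (X.filter (π · = b)).Nontrivial := by
    intro b hb
    obtain ⟨x, hx, y, hy, hxy, rfl⟩ := mem_distSet.mp (mem_of_mem_erase hb)
    have hπb : ∀ z ∈ X, dist x y ∈ distancesFrom X z → π z = dist x y := fun z hz hmem => by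
      rcases mem_insert.mp (hπ z hz hmem) with h | h
      · exact absurd h (ne_of_mem_erase hb)
      · exact (mem_singleton.mp h).symm
    obtain ⟨hxm, hym⟩ := mem_inter.mp (dist_mem_inter_distancesFrom hx hy hxy)
    exact ⟨x, mem_filter.mpr ⟨hx, hπb x hx hxm⟩, y, mem_filter.mpr ⟨hy, hπb y hy hym⟩, hxy⟩
  have hblocks := isTwoDistanceBlocks_fiber (s := B) (D := fun b => {a, b}) hπ
    (fun _ _ => card_le_two) fun b _ b' _ hbb' => by
      refine (card_le_card fun u hu => ?_).trans (card_singleton a).le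
      simp only [mem_inter, mem_insert, mem_singleton] at hu ⊢
      rcases hu with ⟨h1 | h1, h2 | h2⟩
      exacts [h1, h1, h2, absurd (h1.symm.trans h2) hbb']
  have := hblocks.two_mul_card_biUnion_le hB hfiber
  rwa [biUnion_filter_eq_of_maps_to hπB] at this

theorem card_distancesFrom_eq_two (hloc : ∀ x ∈ X, #(distancesFrom X x) ≤ 2) (hX : 2 ≤ #X)
    (h : ∀ a, ∃ x ∈ X, a ∉ distancesFrom X x) {x : EuclideanSpace ℝ (Fin d)} (hx : x ∈ X) :
    #(distancesFrom X x) = 2 := by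
  refine le_antisymm (hloc x hx) (not_lt.mp fun hlt => ?_)
  obtain ⟨s, hs⟩ := card_le_one_iff_subset_singleton.mp (Nat.le_of_lt_succ hlt)
  obtain ⟨y, hy, hyx⟩ := exists_mem_ne (by omega : 1 < #X) x
  have hsx : s ∈ distancesFrom X x := by
    have := dist_mem_distancesFrom hy hyx
    rwa [mem_singleton.mp (hs this)] at this
  -- every other point sees `x` at distance `s`, so `s` would be a common distance
  obtain ⟨z, hz, hsz⟩ := h s
  have hzx : z ≠ x := by rintro rfl; exact hsz hsx
  obtain ⟨hxz, hzz⟩ := mem_inter.mp (dist_mem_inter_distancesFrom hx hz hzx.symm)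
  exact hsz (mem_singleton.mp (hs hxz) ▸ hzz)

theorem intersecting_image_distancesFrom (hX : 2 ≤ #X) :
    ((X.image (distancesFrom X) : Finset (Finset ℝ)) : Set (Finset ℝ)).Intersecting := by
  rintro _ hS _ hT
  obtain ⟨x, hx, rfl⟩ := mem_image.mp hS
  obtain ⟨y, hy, rfl⟩ := mem_image.mp hT
  rw [not_disjoint_iff]
  by_cases hxy : x = y
  · subst hxy
    obtain ⟨z, hz, hzx⟩ := exists_mem_ne (by omega : 1 < #X) x
    exact ⟨dist x z, dist_mem_distancesFrom hz hzx, dist_mem_distancesFrom hz hzx⟩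
  · exact ⟨dist x y, mem_inter.mp (dist_mem_inter_distancesFrom hx hy hxy)⟩

theorem two_mul_card_le_of_forall_exists_notMem (hloc : ∀ x ∈ X, #(distancesFrom X x) ≤ 2)
    (h : ∀ a, ∃ x ∈ X, a ∉ distancesFrom X x) :
    2 * #X ≤ affineDim X * (affineDim X + 1) + 4 := by
  rcases lt_or_ge #X 2 with hX | hX
  · exact le_add_left (by omega)
  set F := X.image (distancesFrom X)
  have hF₂ : ∀ S ∈ F, #S = 2 :=
    forall_mem_image.mpr fun x hx => card_distancesFrom_eq_two hloc hX h hx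
  have hF : #F = 3 := card_eq_three_of_intersecting ((card_pos.mp (by omega)).image _) hF₂
    (intersecting_image_distancesFrom hX) fun a => by
      obtain ⟨x, hx, hax⟩ := h a
      exact ⟨_, mem_image_of_mem _ hx, hax⟩
  have hblocks := isTwoDistanceBlocks_fiber (f := distancesFrom X) (D := id) (s := F)
    (fun _ _ => subset_rfl) (fun S hS => (hF₂ S hS).le)
    fun S hS T hT hST => card_inter_le_one_of_ne (hF₂ S hS) (hF₂ T hT) hST
  have hne : ∀ S ∈ F, (X.filter (distancesFrom X · = S)).Nonempty := by
    intro S hS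
    obtain ⟨x, hx, rfl⟩ := mem_image.mp hS
    exact ⟨x, mem_filter.mpr ⟨hx, rfl⟩⟩
  have := hblocks.two_mul_card_biUnion_le_of_card_eq_three hF hne
  rwa [biUnion_filter_eq_of_maps_to fun x hx => mem_image_of_mem _ hx] at this

theorem two_mul_card_le_of_card_distSet_ne_two (hloc : ∀ x ∈ X, #(distancesFrom X x) ≤ 2)
    (h : #(distSet X) ≠ 2) : 2 * #X ≤ d * (d + 1) + 4 := by
  have hdim : affineDim X * (affineDim X + 1) ≤ d * (d + 1) :=
    Nat.mul_le_mul (affineDim_le_dim X) (Nat.succ_le_succ (affineDim_le_dim X))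
  by_cases hcommon : ∃ a, ∀ x ∈ X, a ∈ distancesFrom X x
  · obtain ⟨a, ha⟩ := hcommon
    rcases (by omega : #(distSet X) ≤ 1 ∨ 3 ≤ #(distSet X)) with h1 | h3
    · linarith [two_mul_card_le_of_card_distSet_le_one h1]
    · linarith [two_mul_card_le_of_forall_mem_distancesFrom hloc h3 ha]
  · push Not at hcommon
    linarith [two_mul_card_le_of_forall_exists_notMem hloc hcommon]

end LocallyTwoDistance

/-- Every locally two-distance set in `ℝ^d` with at least `d(d+1)/2 + 3` points is a
two-distance set. -/
theorem stmt5 (d : ℕ) (X : Finset (EuclideanSpace ℝ (Fin d)))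
    (hloc : ∀ x ∈ X, (distancesFrom X x).card ≤ 2)
    (hcard : d * (d + 1) / 2 + 3 ≤ X.card) :
    (distSet X).card = 2 := by
  by_contra h
  have hX := two_mul_card_le_of_card_distSet_ne_two hloc h
  have heven : d * (d + 1) / 2 * 2 = d * (d + 1) :=
    Nat.div_mul_cancel (Nat.even_mul_succ_self d).two_dvd
  omega
end

section
/- Let X be a two-distance set on the unit sphere S^{d-1} with inner product set A_inn(X) = {α, β} (α, β ∈ [-1,1)). If α + β ≥ 0, then |X| ≤ binom(d+1, 2). -/
open scoped RealInnerProductSpace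

/-!
On `X`, the matrix `(⟪x, y⟫ - α) (⟪x, y⟫ - β)` is `(1 - α) (1 - β) • 1`, so
`⟪x, y⟫ ^ 2 + α β = (1 - α) (1 - β) • 1 + (α + β) • gram` is positive definite when `α + β ≥ 0`,
and has rank `|X|`. Writing `α β = α β ‖x‖ ^ 2`, the same matrix has entries
`∑ i j, x i x j (y i y j + α β δ i j)`, which factor through the symmetric square of `ℝ^d`;
its rank is therefore at most `binom(d + 1, 2)`.
-/

theorem EuclideanSpace.inner_sq_add_mul_norm_sq {d : ℕ} (x y : EuclideanSpace ℝ (Fin d)) (c : ℝ) :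
    ⟪x, y⟫ ^ 2 + c * ‖x‖ ^ 2 = ∑ i, ∑ j, x i * x j * (y i * y j + if i = j then c else 0) := by
  rw [real_norm_sq_eq, sq, PiLp.inner_apply, Finset.sum_mul_sum, Finset.mul_sum]
  simp only [mul_add, Finset.sum_add_distrib, mul_ite, mul_zero, Finset.sum_ite_eq, Finset.mem_univ,
    if_true, RCLike.inner_apply, conj_trivial]
  congr 1 <;> refine Finset.sum_congr rfl fun i _ => ?_
  · exact Finset.sum_congr rfl fun j _ => by ring
  · ring

namespace Matrix

theorem rank_le_card_sym2 {m κ R : Type*} [Fintype κ] [DecidableEq κ] [CommSemiring R]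
    [StrongRankCondition R] (P : Matrix m (κ × κ) R) (hP : ∀ x i j, P x (i, j) = P x (j, i)) :
    P.rank ≤ Fintype.card (Sym2 κ) := by
  let Φ : Matrix m (Sym2 κ) R := of fun x => Sym2.lift ⟨fun i j => P x (i, j), hP x⟩
  let S : Matrix (Sym2 κ) (κ × κ) R := of fun s p => if s = s(p.1, p.2) then 1 else 0
  have hfactor : P = Φ * S := by
    ext x ⟨i, j⟩
    simp [Φ, S, mul_apply]
  rw [hfactor]
  exact (rank_mul_le_left Φ S).trans (rank_le_card_width Φ)

theorem rank_inner_sq_add_mul_norm_sq_le {ι : Type*} [Fintype ι] {d : ℕ}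
    (v : ι → EuclideanSpace ℝ (Fin d)) (c : ℝ) :
    (of fun x y => ⟪v x, v y⟫ ^ 2 + c * ‖v x‖ ^ 2).rank ≤ (d + 1).choose 2 := by
  let P : Matrix ι (Fin d × Fin d) ℝ := of fun x p => v x p.1 * v x p.2
  let Ψ : Matrix (Fin d × Fin d) ι ℝ :=
    of fun p y => v y p.1 * v y p.2 + if p.1 = p.2 then c else 0
  have hfactor : of (fun x y => ⟪v x, v y⟫ ^ 2 + c * ‖v x‖ ^ 2) = P * Ψ := by
    ext x y
    rw [of_apply, EuclideanSpace.inner_sq_add_mul_norm_sq, mul_apply, Fintype.sum_prod_type]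
    rfl
  calc _ = (P * Ψ).rank := by rw [hfactor]
    _ ≤ P.rank := rank_mul_le_left _ _
    _ ≤ Fintype.card (Sym2 (Fin d)) := P.rank_le_card_sym2 fun _ _ _ => mul_comm _ _
    _ = (d + 1).choose 2 := by rw [Sym2.card, Fintype.card_fin]

theorem of_inner_sq_add_mul_norm_sq_eq_of_two_distance {ι E : Type*} [DecidableEq ι]
    [NormedAddCommGroup E] [InnerProductSpace ℝ E] {v : ι → E} (hv : ∀ x, ‖v x‖ = 1) {α β : ℝ}
    (hinn : ∀ x y, x ≠ y → ⟪v x, v y⟫ ∈ ({α, β} : Set ℝ)) :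
    of (fun x y => ⟪v x, v y⟫ ^ 2 + α * β * ‖v x‖ ^ 2)
      = ((1 - α) * (1 - β)) • (1 : Matrix ι ι ℝ) + (α + β) • gram ℝ v := by
  ext x y
  obtain rfl | hxy := eq_or_ne x y
  · simp only [of_apply, add_apply, smul_apply, gram_apply, one_apply_eq, smul_eq_mul,
      real_inner_self_eq_norm_sq, hv]
    ring
  · simp only [of_apply, add_apply, smul_apply, gram_apply, one_apply_ne hxy, smul_eq_mul, hv]
    rcases hinn x y hxy with h | h <;> rw [h] <;> ring

end Matrix

theorem stmt12_general (d : ℕ) (X : Finset (EuclideanSpace ℝ (Fin d)))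
    (hsph : ∀ x ∈ X, ‖x‖ = 1) (α β : ℝ)
    (hinn : {r : ℝ | ∃ x ∈ X, ∃ y ∈ X, x ≠ y ∧ ⟪x, y⟫ = r} = {α, β})
    (hpos : 0 ≤ α + β) :
    X.card ≤ (d + 1).choose 2 := by
  classical
  let v : X → EuclideanSpace ℝ (Fin d) := (↑)
  have hv : ∀ x, ‖v x‖ = 1 := fun x => hsph x x.2
  have hvinn : ∀ x y, x ≠ y → ⟪v x, v y⟫ ∈ ({α, β} : Set ℝ) := fun x y hxy =>
    hinn ▸ ⟨x, x.2, y, y.2, Subtype.coe_ne_coe.2 hxy, rfl⟩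
  have hlt : ∀ t ∈ ({α, β} : Set ℝ), t < 1 := by
    rw [← hinn]
    rintro _ ⟨x, hx, y, hy, hxy, rfl⟩
    exact (inner_lt_one_iff_real_of_norm_eq_one (hsph x hx) (hsph y hy)).2 hxy
  have hα := hlt α (by simp)
  have hβ := hlt β (by simp)
  have hposDef : (Matrix.of fun x y => ⟪v x, v y⟫ ^ 2 + α * β * ‖v x‖ ^ 2).PosDef := by
    rw [Matrix.of_inner_sq_add_mul_norm_sq_eq_of_two_distance hv hvinn]
    exact (Matrix.PosDef.one.smul (by nlinarith)).add_posSemidef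
      ((Matrix.posSemidef_gram ℝ v).smul hpos)
  calc X.card = Fintype.card X := (Fintype.card_coe X).symm
    _ = _ := (Matrix.rank_of_isUnit _ hposDef.isUnit).symm
    _ ≤ _ := Matrix.rank_inner_sq_add_mul_norm_sq_le v _

/-- Let `X` be a two-distance set on the unit sphere `S^{d-1}` with inner product set
`A_inn(X) = {α, β}`.  If `α + β ≥ 0`, then `|X| ≤ binom(d+1, 2)`. -/
theorem stmt12 (d : ℕ) (hd : 2 ≤ d) (X : Finset (EuclideanSpace ℝ (Fin d)))
    (hsph : ∀ x ∈ X, ‖x‖ = 1) (α β : ℝ) (hαβ : α ≠ β)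
    (hinn : {r : ℝ | ∃ x ∈ X, ∃ y ∈ X, x ≠ y ∧ ⟪x, y⟫ = r} = {α, β})
    (hpos : 0 ≤ α + β) :
    X.card ≤ (d + 1).choose 2 :=
  stmt12_general d X hsph α β hinn hpos
end

section
/- Define x_1 = e_1, y_1 = -e_1 and, for 2 ≤ j ≤ k-1, x_j = (e_{2j-2} + √(j²-1) e_{2j-1})/j and y_j = (e_{2j-2} - √(j²-1) e_{2j-1})/j in ℝ^{2k-3}, where {e_i} is the standard orthonormal basis. Then X = {x_1, y_1, ..., x_{k-1}, y_{k-1}} is a locally two-distance set (each point sees at most two distinct distances) which is a k-distance set (exactly k distinct distances occur in total). -/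
open scoped Classical

/-- The points `x_j` (for `s = 1`) and `y_j` (for `s = -1`) of the example:
`x_1 = e_1`, `y_1 = -e_1`, and for `j ≥ 2`,
`x_j = (e_{2j-2} + √(j²-1) e_{2j-1})/j`, `y_j = (e_{2j-2} - √(j²-1) e_{2j-1})/j`
(indices of standard basis vectors are 1-based; coordinates below are 0-based). -/
noncomputable def examplePoint (k j : ℕ) (s : ℝ) : EuclideanSpace ℝ (Fin (2 * k - 3)) :=
  if j = 1 then WithLp.toLp 2 (fun i : Fin (2 * k - 3) => if (i : ℕ) = 0 then s else 0)
  else WithLp.toLp 2 (fun i : Fin (2 * k - 3) => if (i : ℕ) = 2 * j - 3 then 1 / (j : ℝ)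
    else if (i : ℕ) = 2 * j - 2 then s * Real.sqrt ((j : ℝ) ^ 2 - 1) / (j : ℝ) else 0)

/-!
All points are unit vectors, and points with different indices `j ≠ j'` are supported on
disjoint coordinate blocks, so they are orthogonal and at distance `√2`. Hence each point sees
only the distances `√2` and `‖x_j - y_j‖`, and the latter are `2` for `j = 1` and
`2 √(1 - 1/j²) ∈ [√3, 2)` for `j ≥ 2`: pairwise distinct and different from `√2`. This gives
`(k - 1) + 1 = k` distances in total.
-/

open Finset
open scoped InnerProductSpace

lemma dist_mem_distSet {d : ℕ} {X : Finset (EuclideanSpace ℝ (Fin d))}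
    {x y : EuclideanSpace ℝ (Fin d)} (hx : x ∈ X) (hy : y ∈ X) (hxy : x ≠ y) :
    dist x y ∈ distSet X :=
  mem_image.mpr ⟨(x, y), mem_offDiag.mpr ⟨hx, hy, hxy⟩, rfl⟩

section ProductCluster

variable {d : ℕ} {ι σ : Type*} {S : Finset ι} {T : Finset σ}
  {f : ι × σ → EuclideanSpace ℝ (Fin d)} {c : ℝ} {g : ι → ℝ}

def IsClusterDist (S : Finset ι) (T : Finset σ) (f : ι × σ → EuclideanSpace ℝ (Fin d))
    (c : ℝ) (g : ι → ℝ) : Prop :=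
  ∀ p ∈ S ×ˢ T, ∀ q ∈ S ×ˢ T, p ≠ q → dist (f p) (f q) = if p.1 = q.1 then g p.1 else c

lemma IsClusterDist.dist_mem (h : IsClusterDist S T f c g) {p q : ι × σ} (hp : p ∈ S ×ˢ T)
    (hq : q ∈ S ×ˢ T) (hpq : f p ≠ f q) : dist (f p) (f q) ∈ ({c, g p.1} : Finset ℝ) := by
  rw [h p hp q hq (ne_of_apply_ne f hpq)]
  split_ifs <;> simp

lemma IsClusterDist.card_distancesFrom_le_two (h : IsClusterDist S T f c g) :
    ∀ x ∈ (S ×ˢ T).image f, (distancesFrom ((S ×ˢ T).image f) x).card ≤ 2 := by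
  rintro _ hx
  obtain ⟨p, hp, rfl⟩ := mem_image.mp hx
  have hsub : distancesFrom ((S ×ˢ T).image f) (f p) ⊆ {c, g p.1} := by
    intro t ht
    obtain ⟨_, hy, rfl⟩ := mem_image.mp ht
    obtain ⟨hne, hy⟩ := mem_erase.mp hy
    obtain ⟨q, hq, rfl⟩ := mem_image.mp hy
    exact h.dist_mem hp hq (Ne.symm hne)
  exact (card_le_card hsub).trans card_le_two

lemma IsClusterDist.distSet_eq (h : IsClusterDist S T f c g) (hS : 1 < #S) (hT : 1 < #T)
    (hc : c ≠ 0) (hg : ∀ i ∈ S, g i ≠ 0) :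
    distSet ((S ×ˢ T).image f) = insert c (S.image g) := by
  refine Subset.antisymm (fun t ht => ?_) (insert_subset_iff.mpr ⟨?_, fun t ht => ?_⟩)
  · obtain ⟨⟨x, y⟩, hxy, rfl⟩ := mem_image.mp ht
    obtain ⟨hx, hy, hxy⟩ := mem_offDiag.mp hxy
    obtain ⟨p, hp, rfl⟩ := mem_image.mp hx
    obtain ⟨q, hq, rfl⟩ := mem_image.mp hy
    exact insert_subset_insert c (singleton_subset_iff.mpr
      (mem_image_of_mem g (mem_product.mp hp).1)) (h.dist_mem hp hq hxy)
  · obtain ⟨i, hi, i', hi', hii'⟩ := one_lt_card.mp hS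
    obtain ⟨a, ha⟩ := card_pos.mp (zero_lt_one.trans hT)
    have hp : (i, a) ∈ S ×ˢ T := mk_mem_product hi ha
    have hq : (i', a) ∈ S ×ˢ T := mk_mem_product hi' ha
    have hd := h _ hp _ hq (by simpa using hii')
    rw [if_neg hii'] at hd
    exact hd ▸ dist_mem_distSet (mem_image_of_mem f hp) (mem_image_of_mem f hq)
      (dist_ne_zero.mp (hd ▸ hc))
  · obtain ⟨i, hi, rfl⟩ := mem_image.mp ht
    obtain ⟨a, ha, b, hb, hab⟩ := one_lt_card.mp hT
    have hp : (i, a) ∈ S ×ˢ T := mk_mem_product hi ha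
    have hq : (i, b) ∈ S ×ˢ T := mk_mem_product hi hb
    have hd := h _ hp _ hq (by simpa using hab)
    rw [if_pos rfl] at hd
    exact hd ▸ dist_mem_distSet (mem_image_of_mem f hp) (mem_image_of_mem f hq)
      (dist_ne_zero.mp (hd ▸ hg i hi))

lemma IsClusterDist.card_distSet (h : IsClusterDist S T f c g) (hS : 1 < #S) (hT : 1 < #T)
    (hc : c ≠ 0) (hg : ∀ i ∈ S, g i ≠ 0) (hgc : ∀ i ∈ S, g i ≠ c) (hinj : Set.InjOn g S) :
    #(distSet ((S ×ˢ T).image f)) = #S + 1 := by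
  rw [h.distSet_eq hS hT hc hg, card_insert_of_notMem, card_image_of_injOn hinj]
  simpa using hgc

end ProductCluster

/-- `‖x_j - y_j‖²`; the case `j = 1` is separate because `x_1 = e_1` does not follow the pattern
of the other points. -/
noncomputable def examplePairSqDist (j : ℕ) : ℝ := if j = 1 then 4 else 4 - 4 / (j : ℝ) ^ 2

section

variable {k j j' : ℕ} {s s' : ℝ}

/-- Coordinate `i` can only be nonzero on the point with index `(i + 3) / 2`
(for `j = 0` the point is `0`, as `1 / 0 = 0` and all other coordinates vanish). -/
lemma examplePoint_apply_eq_zero (i : Fin (2 * k - 3)) (hi : ((i : ℕ) + 3) / 2 ≠ j) :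
    examplePoint k j s i = 0 := by
  unfold examplePoint
  split_ifs <;> dsimp only <;> split_ifs <;>
    first | rfl | omega | (obtain rfl : j = 0 := by omega); simp

lemma inner_examplePoint_eq_zero (h : j ≠ j') :
    ⟪examplePoint k j s, examplePoint k j' s'⟫_ℝ = 0 := by
  refine Finset.sum_eq_zero fun i _ => ?_
  rcases eq_or_ne (((i : ℕ) + 3) / 2) j with hi | hi
  · simp [examplePoint_apply_eq_zero (s := s') i (hi ▸ h)]
  · simp [examplePoint_apply_eq_zero (s := s) i hi]

lemma examplePoint_one (hk : 2 ≤ k) :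
    examplePoint k 1 s = EuclideanSpace.single ⟨0, by omega⟩ s := by
  ext i
  simp [examplePoint, Fin.ext_iff]

lemma examplePoint_of_two_le (hj : 2 ≤ j) (hjk : j < k) :
    examplePoint k j s =
      EuclideanSpace.single ⟨2 * j - 3, by omega⟩ (1 / (j : ℝ)) +
        EuclideanSpace.single ⟨2 * j - 2, by omega⟩ (s * √((j : ℝ) ^ 2 - 1) / j) := by
  ext i
  simp only [examplePoint, if_neg (show j ≠ 1 by omega), PiLp.toLp_apply, PiLp.add_apply,
    PiLp.single_apply, Fin.ext_iff]
  split_ifs <;> first | omega | simp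

lemma sq_sqrt_sq_sub_one (hj : 1 ≤ j) : √((j : ℝ) ^ 2 - 1) ^ 2 = (j : ℝ) ^ 2 - 1 :=
  Real.sq_sqrt (by nlinarith [(Nat.one_le_cast (α := ℝ)).mpr hj])

lemma norm_examplePoint (hj : 1 ≤ j) (hjk : j < k) (hs : |s| = 1) :
    ‖examplePoint k j s‖ = 1 := by
  rcases eq_or_lt_of_le hj with rfl | hj
  · simp [examplePoint_one (k := k) (s := s) (by omega), hs]
  rw [examplePoint_of_two_le hj hjk, ← pow_eq_one_iff_of_nonneg (norm_nonneg _) two_ne_zero,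
    norm_add_sq_real, EuclideanSpace.inner_single_left, PiLp.single_apply,
    if_neg (by simp [Fin.ext_iff]; omega)]
  have hj0 : (j : ℝ) ≠ 0 := by positivity
  simp only [PiLp.norm_single, Real.norm_eq_abs, sq_abs, div_pow, mul_pow,
    sq_sqrt_sq_sub_one hj.le, ← sq_abs s, hs]
  field_simp
  ring

lemma dist_examplePoint_of_ne (hj : 1 ≤ j) (hjk : j < k) (hj' : 1 ≤ j') (hj'k : j' < k)
    (hs : |s| = 1) (hs' : |s'| = 1) (h : j ≠ j') :
    dist (examplePoint k j s) (examplePoint k j' s') = √2 := by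
  rw [dist_eq_norm, ← Real.sqrt_sq (norm_nonneg _), norm_sub_sq_real,
    inner_examplePoint_eq_zero h, norm_examplePoint hj hjk hs, norm_examplePoint hj' hj'k hs']
  norm_num

lemma dist_examplePoint_neg (hj : 1 ≤ j) (hjk : j < k) (hs : |s| = 1) :
    dist (examplePoint k j s) (examplePoint k j (-s)) = √(examplePairSqDist j) := by
  rw [← Real.sqrt_sq dist_nonneg]
  congr 1
  have hs2 : s ^ 2 = 1 := by rw [← sq_abs, hs, one_pow]
  rcases eq_or_lt_of_le hj with rfl | hj2
  · rw [examplePoint_one (k := k) (by omega), examplePoint_one (k := k) (by omega),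
      PiLp.dist_single_same, Real.dist_eq, sq_abs, examplePairSqDist, if_pos rfl]
    linear_combination 4 * hs2
  · rw [examplePoint_of_two_le hj2 hjk, examplePoint_of_two_le hj2 hjk, dist_add_left,
      PiLp.dist_single_same, Real.dist_eq, sq_abs, examplePairSqDist, if_neg hj2.ne']
    have hj0 : (j : ℝ) ≠ 0 := by positivity
    field_simp
    linear_combination (4 * (j : ℝ) ^ 2 - 4) * hs2 + 4 * s ^ 2 * sq_sqrt_sq_sub_one hj

end

lemma examplePairSqDist_of_two_le {j : ℕ} (hj : 2 ≤ j) :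
    examplePairSqDist j = 4 - 4 / (j : ℝ) ^ 2 :=
  if_neg (by omega)

lemma examplePairSqDist_lt_four {j : ℕ} (hj : 2 ≤ j) : examplePairSqDist j < 4 := by
  have : (0 : ℝ) < j := by exact_mod_cast (show 0 < j by omega)
  rw [examplePairSqDist_of_two_le hj]
  linarith [show 0 < 4 / (j : ℝ) ^ 2 by positivity]

lemma two_lt_examplePairSqDist {j : ℕ} (hj : 1 ≤ j) : 2 < examplePairSqDist j := by
  rcases eq_or_lt_of_le hj with rfl | hj2
  · norm_num [examplePairSqDist]
  have hj4 : (4 : ℝ) ≤ (j : ℝ) ^ 2 := by nlinarith [(Nat.ofNat_le_cast (α := ℝ)).mpr hj2]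
  rw [examplePairSqDist_of_two_le hj2]
  linarith [(div_le_one (by positivity : (0 : ℝ) < (j : ℝ) ^ 2)).mpr hj4]

lemma examplePairSqDist_injOn : Set.InjOn examplePairSqDist (Set.Ici 1) := by
  intro a ha b hb hab
  simp only [Set.mem_Ici] at ha hb
  rcases eq_or_lt_of_le ha with rfl | ha2 <;> rcases eq_or_lt_of_le hb with rfl | hb2
  · rfl
  · exact absurd hab (examplePairSqDist_lt_four hb2).ne'
  · exact absurd hab (examplePairSqDist_lt_four ha2).ne
  · rw [examplePairSqDist_of_two_le ha2, examplePairSqDist_of_two_le hb2, div_eq_mul_inv,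
      div_eq_mul_inv] at hab
    have : (a : ℝ) ^ 2 = (b : ℝ) ^ 2 := by
      rw [← inv_inj, ← mul_right_inj' (four_ne_zero' ℝ)]
      linarith
    exact Nat.pow_left_injective two_ne_zero (by exact_mod_cast this)

lemma sqrt_two_lt_sqrt_examplePairSqDist {j : ℕ} (hj : 1 ≤ j) : √2 < √(examplePairSqDist j) :=
  Real.sqrt_lt_sqrt zero_le_two (two_lt_examplePairSqDist hj)

lemma sqrt_examplePairSqDist_injOn : Set.InjOn (fun j => √(examplePairSqDist j)) (Set.Ici 1) :=
  fun a ha b hb hab => examplePairSqDist_injOn ha hb <| (Real.sqrt_inj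
    (by linarith [two_lt_examplePairSqDist ha]) (by linarith [two_lt_examplePairSqDist hb])).mp hab

lemma isClusterDist_examplePoint (k : ℕ) :
    IsClusterDist (Icc 1 (k - 1)) {1, -1} (fun p => examplePoint k p.1 p.2) √2
      (fun j => √(examplePairSqDist j)) := by
  rintro ⟨j, s⟩ hp ⟨j', s'⟩ hq hpq
  simp only [mem_product, mem_Icc, mem_insert, mem_singleton] at hp hq
  have hs : |s| = 1 := by rcases hp.2 with rfl | rfl <;> simp
  have hs' : |s'| = 1 := by rcases hq.2 with rfl | rfl <;> simp
  dsimp only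
  split_ifs with hjj
  · subst hjj
    have hss' : s' = -s := by
      rcases hp.2 with rfl | rfl <;> rcases hq.2 with rfl | rfl <;> simp_all
    rw [hss', dist_examplePoint_neg hp.1.1 (by omega) hs]
  · exact dist_examplePoint_of_ne hp.1.1 (by omega) hq.1.1 (by omega) hs hs' hjj

/-- The set `X = {x_1, y_1, …, x_{k-1}, y_{k-1}} ⊆ ℝ^{2k-3}` is a locally two-distance set
which is a `k`-distance set. -/
theorem stmt15 (k : ℕ) (hk : 3 ≤ k) :
    (∀ x ∈ ((Finset.Icc 1 (k - 1)) ×ˢ ({(1 : ℝ), -1} : Finset ℝ)).image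
        (fun p => examplePoint k p.1 p.2),
      (distancesFrom (((Finset.Icc 1 (k - 1)) ×ˢ ({(1 : ℝ), -1} : Finset ℝ)).image
        (fun p => examplePoint k p.1 p.2)) x).card ≤ 2) ∧
    (distSet (((Finset.Icc 1 (k - 1)) ×ˢ ({(1 : ℝ), -1} : Finset ℝ)).image
        (fun p => examplePoint k p.1 p.2))).card = k := by
  have hX := isClusterDist_examplePoint k
  refine ⟨hX.card_distancesFrom_le_two, ?_⟩
  have hS : 1 < #(Icc 1 (k - 1)) := by simp only [Nat.card_Icc]; omega
  have hT : 1 < #({1, -1} : Finset ℝ) := by rw [card_pair (by norm_num)]; norm_num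
  have hgt : ∀ j ∈ Icc 1 (k - 1), √2 < √(examplePairSqDist j) :=
    fun j hj => sqrt_two_lt_sqrt_examplePairSqDist (mem_Icc.mp hj).1
  rw [hX.card_distSet hS hT (by positivity)
    (fun j hj => ((Real.sqrt_nonneg 2).trans_lt (hgt j hj)).ne') (fun j hj => (hgt j hj).ne')
    (sqrt_examplePairSqDist_injOn.mono fun j hj => ?_), Nat.card_Icc]
  · omega
  · exact (mem_Icc.mp hj).1
end
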